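/- arXiv:1504.00800 — 5 statements merged into one kernel-verified Lean document; each statement's English description precedes it below -/
import Mathlib

section
/- Let n ≥ 1 and let A be an n×n nonnegative real matrix such that for all i, j either A_{ij} > 0 or A_{ji} > 0. Define B by B_{ij} = max(A_{ij}, (A_{ji})^{-}) where t^{-} = 1/t if t > 0 and t^{-} = 0 otherwise, and let μ = λ(B) be the max-times spectral radius of B. A positive vector x ∈ ℝ_{>0}^n satisfies ρ(A, x) = μ (i.e., x minimizes ρ(A, ·) over positive vectors) if and only if there exists a positive vector u ∈ ℝ_{>0}^n such that x = (μ^{-1}B)^* ⊗ u. -/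
open scoped BigOperators

noncomputable section

/-- The max-times spectral radius (maximum geometric cycle mean) of a
nonnegative `n × n` real matrix. -/
def mtSpecRad {n : ℕ} (A : Matrix (Fin n) (Fin n) ℝ) : ℝ :=
  sSup { r : ℝ | ∃ (k : ℕ) (hk : 0 < k), k ≤ n ∧ ∃ f : Fin k → Fin n,
    r = (∏ t : Fin k, A (f t) (f ⟨((t : ℕ) + 1) % k, Nat.mod_lt _ hk⟩)) ^ ((k : ℝ)⁻¹) }

/-- The maximum cycle mean of a real `n × n` matrix (max-plus spectral radius). -/
def mpCycleMean {n : ℕ} (A : Matrix (Fin n) (Fin n) ℝ) : ℝ :=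
  sSup { r : ℝ | ∃ (k : ℕ) (hk : 0 < k), k ≤ n ∧ ∃ f : Fin k → Fin n,
    r = (∑ t : Fin k, A (f t) (f ⟨((t : ℕ) + 1) % k, Nat.mod_lt _ hk⟩)) / (k : ℝ) }

/-- Max-times matrix product. -/
def mtMul {n : ℕ} (A B : Matrix (Fin n) (Fin n) ℝ) : Matrix (Fin n) (Fin n) ℝ :=
  Matrix.of fun i j => ⨆ k : Fin n, A i k * B k j

/-- Max-times matrix powers, with `A^{⊗0} = I`. -/
def mtPow {n : ℕ} (A : Matrix (Fin n) (Fin n) ℝ) : ℕ → Matrix (Fin n) (Fin n) ℝ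
  | 0 => Matrix.of fun i j => if i = j then 1 else 0
  | (k + 1) => mtMul (mtPow A k) A

/-- Max-times Kleene star: entrywise maximum of `I, S, S^{⊗2}, …, S^{⊗(n-1)}`. -/
def mtStar {n : ℕ} (S : Matrix (Fin n) (Fin n) ℝ) : Matrix (Fin n) (Fin n) ℝ :=
  Matrix.of fun i j => ⨆ k : Fin n, mtPow S (k : ℕ) i j

/-- Max-times matrix-vector product. -/
def mtVecMul {n : ℕ} (S : Matrix (Fin n) (Fin n) ℝ) (u : Fin n → ℝ) : Fin n → ℝ :=
  fun i => ⨆ j, S i j * u j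

/-- Max-plus matrix product. -/
def mpMul {n : ℕ} (A B : Matrix (Fin n) (Fin n) ℝ) : Matrix (Fin n) (Fin n) ℝ :=
  Matrix.of fun i j => ⨆ k : Fin n, (A i k + B k j)

/-- `mpPow A k` is the max-plus power `A^{⊗(k+1)}`. -/
def mpPow {n : ℕ} (A : Matrix (Fin n) (Fin n) ℝ) : ℕ → Matrix (Fin n) (Fin n) ℝ
  | 0 => A
  | (k + 1) => mpMul (mpPow A k) A

/-- Max-plus Kleene star: `S^*_{ii} = max(0, max_{1≤k≤n-1} (S^{⊗k})_{ii})` and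
`S^*_{ij} = max_{1≤k≤n-1} (S^{⊗k})_{ij}` for `i ≠ j`. -/
def mpStar {n : ℕ} (S : Matrix (Fin n) (Fin n) ℝ) : Matrix (Fin n) (Fin n) ℝ :=
  Matrix.of fun i j =>
    if i = j then max 0 (⨆ k : Fin (n - 1), mpPow S (k : ℕ) i j)
    else ⨆ k : Fin (n - 1), mpPow S (k : ℕ) i j

/-- Max-plus matrix-vector product. -/
def mpVecMul {n : ℕ} (S : Matrix (Fin n) (Fin n) ℝ) (x : Fin n → ℝ) : Fin n → ℝ :=
  fun i => ⨆ j, (S i j + x j)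

/-- Chebyshev-like (max-times) distance between a nonnegative matrix `A` and the
rank-one reciprocal matrix with entries `x i / x j`. -/
def mtRho {n : ℕ} (A : Matrix (Fin n) (Fin n) ℝ) (x : Fin n → ℝ) : ℝ :=
  max (⨆ p : Fin n × Fin n, A p.1 p.2 * x p.2 / x p.1)
    (sSup { r : ℝ | ∃ i j, 0 < A i j ∧ r = x i / (A i j * x j) })

/-- The alternating max-times product `A ⊗ C^{⊗ i₁} ⊗ A ⊗ C^{⊗ i₂} ⊗ ⋯ ⊗ A ⊗ C^{⊗ i_k}`. -/
def mtChain {n : ℕ} (A C : Matrix (Fin n) (Fin n) ℝ) :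
    (k : ℕ) → (Fin k → ℕ) → Matrix (Fin n) (Fin n) ℝ
  | 0, _ => Matrix.of fun i j => if i = j then 1 else 0
  | (k + 1), f => mtMul (mtMul A (mtPow C (f 0))) (mtChain A C k (fun t => f t.succ))

/-- The optimal value `θ` of the constrained max-times approximation problem. -/
def mtTheta {n : ℕ} (A C : Matrix (Fin n) (Fin n) ℝ) : ℝ :=
  max (mtSpecRad A)
    (sSup { r : ℝ | ∃ k : ℕ, 0 < k ∧ k ≤ n - 1 ∧ ∃ f : Fin k → ℕ,
      1 ≤ ∑ t, f t ∧ (∑ t, f t) ≤ n - k ∧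
      r = (⨆ i, mtChain A C k f i i) ^ ((k : ℝ)⁻¹) })

/-!
Put `C = μ⁻¹ B`. Since `B` dominates both `A` and the reciprocal transpose of `A`, `ρ(A, x)` is
the least `c` with `B i j * x j ≤ c * x i` for all `i, j`; multiplying these inequalities around a
cycle shows `λ(B) ≤ ρ(A, x)`. Hence `x` is a minimizer exactly when `C ⊗ x ≤ x`.

As `λ(C) = 1`, every cycle of `C` has weight at most one, so cutting cycles out of paths gives
`C^{⊗m} ≤ C^*` for all `m`, whence `C ⊗ C^* ≤ C^*` and every `C^* ⊗ u` is such an `x`.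
Conversely, `C ⊗ x ≤ x` propagates to `C^* ⊗ x ≤ x`, while `x ≤ C^* ⊗ x` because `I ≤ C^*`.
-/

variable {n : ℕ}

section MaxTimesPowers

variable {C : Matrix (Fin n) (Fin n) ℝ}

theorem mtPow_zero_apply (i j : Fin n) : mtPow C 0 i j = if i = j then 1 else 0 := rfl

theorem le_mtPow_succ (m : ℕ) (i k j : Fin n) : mtPow C m i k * C k j ≤ mtPow C (m + 1) i j :=
  le_ciSup (Finite.bddAbove_range fun k => mtPow C m i k * C k j) k

theorem mtPow_succ_le {m : ℕ} {i j : Fin n} {c : ℝ} (h : ∀ k, mtPow C m i k * C k j ≤ c) :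
    mtPow C (m + 1) i j ≤ c :=
  haveI : Nonempty (Fin n) := ⟨i⟩
  ciSup_le h

theorem exists_mtPow_succ_eq (m : ℕ) (i j : Fin n) :
    ∃ k, mtPow C (m + 1) i j = mtPow C m i k * C k j :=
  haveI : Nonempty (Fin n) := ⟨i⟩
  (exists_eq_ciSup_of_finite (f := fun k => mtPow C m i k * C k j)).imp fun _ h => h.symm

variable (hC : ∀ i j, 0 ≤ C i j)
include hC

theorem mtPow_nonneg (m : ℕ) (i j : Fin n) : 0 ≤ mtPow C m i j := by
  induction m generalizing j with
  | zero => rw [mtPow_zero_apply]; split_ifs <;> norm_num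
  | succ m ih => exact (mul_nonneg (ih i) (hC i j)).trans (le_mtPow_succ m i i j)

theorem mtPow_one_apply (i j : Fin n) : mtPow C 1 i j = C i j := by
  refine le_antisymm (mtPow_succ_le fun k => ?_) ?_
  · rw [mtPow_zero_apply]
    split_ifs with hik
    · rw [hik, one_mul]
    · rw [zero_mul]; exact hC i j
  · simpa [mtPow_zero_apply] using le_mtPow_succ (C := C) 0 i i j

theorem mtPow_mul_mtPow_le (p q : ℕ) (i k j : Fin n) :
    mtPow C p i k * mtPow C q k j ≤ mtPow C (p + q) i j := by
  induction q generalizing j with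
  | zero =>
    rw [mtPow_zero_apply]
    split_ifs with hkj
    · rw [hkj, mul_one]; rfl
    · rw [mul_zero]; exact mtPow_nonneg hC _ i j
  | succ q ih =>
    obtain ⟨l, hl⟩ := exists_mtPow_succ_eq (C := C) q k j
    calc mtPow C p i k * mtPow C (q + 1) k j
        = mtPow C p i k * mtPow C q k l * C l j := by rw [hl, mul_assoc]
      _ ≤ mtPow C (p + q) i l * C l j := by gcongr; exacts [hC l j, ih l]
      _ ≤ mtPow C (p + q + 1) i j := le_mtPow_succ _ i l j

end MaxTimesPowers

section Paths

variable {C : Matrix (Fin n) (Fin n) ℝ}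

def pathWeight (C : Matrix (Fin n) (Fin n) ℝ) (g : ℕ → Fin n) (a b : ℕ) : ℝ :=
  ∏ t ∈ Finset.Ico a b, C (g t) (g (t + 1))

theorem pathWeight_mul {g : ℕ → Fin n} {a b c : ℕ} (hab : a ≤ b) (hbc : b ≤ c) :
    pathWeight C g a b * pathWeight C g b c = pathWeight C g a c :=
  Finset.prod_Ico_consecutive _ hab hbc

theorem pathWeight_succ {g : ℕ → Fin n} {a b : ℕ} (hab : a ≤ b) :
    pathWeight C g a (b + 1) = pathWeight C g a b * C (g b) (g (b + 1)) :=
  Finset.prod_Ico_succ_top hab _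

variable (hC : ∀ i j, 0 ≤ C i j)
include hC

theorem pathWeight_nonneg (g : ℕ → Fin n) (a b : ℕ) : 0 ≤ pathWeight C g a b :=
  Finset.prod_nonneg fun _ _ => hC _ _

theorem pathWeight_le_mtPow (g : ℕ → Fin n) {a b : ℕ} (hab : a ≤ b) :
    pathWeight C g a b ≤ mtPow C (b - a) (g a) (g b) := by
  obtain ⟨d, rfl⟩ := Nat.exists_eq_add_of_le hab
  rw [Nat.add_sub_cancel_left]
  induction d with
  | zero => simp [pathWeight, mtPow_zero_apply]
  | succ d ih =>
    rw [← add_assoc, pathWeight_succ (Nat.le_add_right a d)]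
    calc pathWeight C g a (a + d) * C (g (a + d)) (g (a + d + 1))
        ≤ mtPow C d (g a) (g (a + d)) * C (g (a + d)) (g (a + d + 1)) := by
          gcongr
          · exact hC _ _
          · exact ih (Nat.le_add_right a d)
      _ ≤ mtPow C (d + 1) (g a) (g (a + d + 1)) := le_mtPow_succ d _ _ _

theorem exists_mtPow_le_pathWeight (m : ℕ) (i j : Fin n) :
    ∃ g : ℕ → Fin n, g 0 = i ∧ g (m + 1) = j ∧ mtPow C (m + 1) i j ≤ pathWeight C g 0 (m + 1) := by
  induction m generalizing j with
  | zero =>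
    refine ⟨fun t => if t = 0 then i else j, rfl, rfl, ?_⟩
    simp [pathWeight, mtPow_one_apply hC]
  | succ m ih =>
    obtain ⟨k, hk⟩ := exists_mtPow_succ_eq (C := C) (m + 1) i j
    obtain ⟨g, rfl, rfl, hg⟩ := ih k
    refine ⟨Function.update g (m + 2) j, by simp, by simp, ?_⟩
    have hprefix :
        pathWeight C (Function.update g (m + 2) j) 0 (m + 1) = pathWeight C g 0 (m + 1) :=
      Finset.prod_congr rfl fun t ht => by
        have := (Finset.mem_Ico.mp ht).2
        rw [Function.update_of_ne (by omega), Function.update_of_ne (by omega)]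
    rw [hk, pathWeight_succ (Nat.zero_le _), hprefix, Function.update_self,
      Function.update_of_ne (by omega)]
    exact mul_le_mul_of_nonneg_right hg (hC _ _)

end Paths

section SpectralRadius

variable {A : Matrix (Fin n) (Fin n) ℝ}

def cycleProd (A : Matrix (Fin n) (Fin n) ℝ) {k : ℕ} (hk : 0 < k) (f : Fin k → Fin n) : ℝ :=
  ∏ t : Fin k, A (f t) (f ⟨((t : ℕ) + 1) % k, Nat.mod_lt _ hk⟩)

def cycleGeomMeans (A : Matrix (Fin n) (Fin n) ℝ) : Set ℝ :=
  { r | ∃ (k : ℕ) (hk : 0 < k), k ≤ n ∧ ∃ f : Fin k → Fin n, r = cycleProd A hk f ^ (k : ℝ)⁻¹ }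

theorem mtSpecRad_eq_sSup_cycleGeomMeans : mtSpecRad A = sSup (cycleGeomMeans A) := rfl

theorem cycleProd_smul (c : ℝ) {k : ℕ} (hk : 0 < k) (f : Fin k → Fin n) :
    cycleProd (c • A) hk f = c ^ k * cycleProd A hk f := by
  simp [cycleProd, Finset.prod_mul_distrib]

variable (hA : ∀ i j, 0 ≤ A i j)
include hA

theorem cycleProd_nonneg {k : ℕ} (hk : 0 < k) (f : Fin k → Fin n) : 0 ≤ cycleProd A hk f :=
  Finset.prod_nonneg fun _ _ => hA _ _

theorem cycleProd_le_pow_of_mul_le {x : Fin n → ℝ} (hx : ∀ i, 0 < x i) {c : ℝ}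
    (h : ∀ i j, A i j * x j ≤ c * x i) {k : ℕ} (hk : 0 < k) (f : Fin k → Fin n) :
    cycleProd A hk f ≤ c ^ k := by
  have : NeZero k := ⟨hk.ne'⟩
  have hsucc : ∀ t : Fin k, (⟨((t : ℕ) + 1) % k, Nat.mod_lt _ hk⟩ : Fin k) = t + 1 := fun t =>
    Fin.ext (by simp [Fin.val_add])
  have hedge : ∀ i j, A i j ≤ c * x i / x j := fun i j => by
    rw [le_div_iff₀ (hx j)]; exact h i j
  have hrot : ∏ t : Fin k, x (f (t + 1)) = ∏ t : Fin k, x (f t) :=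
    Equiv.prod_comp (Equiv.addRight 1) fun t => x (f t)
  have hprod_pos : 0 < ∏ t : Fin k, x (f t) := Finset.prod_pos fun _ _ => hx _
  calc cycleProd A hk f ≤ ∏ t : Fin k, c * x (f t) / x (f (t + 1)) :=
        Finset.prod_le_prod (fun _ _ => hA _ _) fun t _ => hsucc t ▸ hedge _ _
    _ = c ^ k := by
        rw [Finset.prod_div_distrib, Finset.prod_mul_distrib, Finset.prod_const, Finset.card_univ,
          Fintype.card_fin, hrot, mul_div_assoc, div_self hprod_pos.ne', mul_one]

theorem le_of_mem_cycleGeomMeans_of_mul_le {x : Fin n → ℝ} (hx : ∀ i, 0 < x i) {c : ℝ}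
    (h : ∀ i j, A i j * x j ≤ c * x i) {r : ℝ} (hr : r ∈ cycleGeomMeans A) : r ≤ c := by
  obtain ⟨k, hk, -, f, rfl⟩ := hr
  have hc : 0 ≤ c := by
    have := h (f ⟨0, hk⟩) (f ⟨0, hk⟩)
    nlinarith [hA (f ⟨0, hk⟩) (f ⟨0, hk⟩), hx (f ⟨0, hk⟩)]
  calc cycleProd A hk f ^ (k : ℝ)⁻¹ ≤ (c ^ k) ^ (k : ℝ)⁻¹ := by
        gcongr
        exacts [cycleProd_nonneg hA hk f, cycleProd_le_pow_of_mul_le hA hx h hk f]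
    _ = c := Real.pow_rpow_inv_natCast hc hk.ne'

theorem bddAbove_cycleGeomMeans : BddAbove (cycleGeomMeans A) :=
  ⟨⨆ p : Fin n × Fin n, A p.1 p.2, fun _ =>
    le_of_mem_cycleGeomMeans_of_mul_le hA (x := fun _ => 1) (fun _ => one_pos) fun i j => by
      simpa using le_ciSup (Finite.bddAbove_range fun p : Fin n × Fin n => A p.1 p.2) (i, j)⟩

theorem mtSpecRad_le_of_mul_le [NeZero n] {x : Fin n → ℝ} (hx : ∀ i, 0 < x i) {c : ℝ}
    (h : ∀ i j, A i j * x j ≤ c * x i) : mtSpecRad A ≤ c :=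
  csSup_le ⟨_, 1, one_pos, NeZero.one_le, fun _ => 0, rfl⟩ fun _ =>
    le_of_mem_cycleGeomMeans_of_mul_le hA hx h

theorem cycleProd_le_mtSpecRad_pow {k : ℕ} (hk : 0 < k) (hkn : k ≤ n) (f : Fin k → Fin n) :
    cycleProd A hk f ≤ mtSpecRad A ^ k := by
  have hprod := cycleProd_nonneg hA hk f
  calc cycleProd A hk f = (cycleProd A hk f ^ (k : ℝ)⁻¹) ^ k :=
        (Real.rpow_inv_natCast_pow hprod hk.ne').symm
    _ ≤ mtSpecRad A ^ k := by
        gcongr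
        exact le_csSup (bddAbove_cycleGeomMeans hA) ⟨k, hk, hkn, f, rfl⟩

theorem diag_le_mtSpecRad (i : Fin n) : A i i ≤ mtSpecRad A := by
  simpa [cycleProd] using cycleProd_le_mtSpecRad_pow hA one_pos i.pos fun _ => i

open scoped Pointwise in
theorem mtSpecRad_smul {c : ℝ} (hc : 0 ≤ c) : mtSpecRad (c • A) = c * mtSpecRad A := by
  have hmeans : cycleGeomMeans (c • A) = c • cycleGeomMeans A := by
    ext r
    simp only [cycleGeomMeans, Set.mem_smul_set, Set.mem_ofPred_eq, smul_eq_mul]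
    constructor
    · rintro ⟨k, hk, hkn, f, rfl⟩
      refine ⟨_, ⟨k, hk, hkn, f, rfl⟩, ?_⟩
      rw [cycleProd_smul, Real.mul_rpow (by positivity) (cycleProd_nonneg hA hk f),
        Real.pow_rpow_inv_natCast hc hk.ne']
    · rintro ⟨_, ⟨k, hk, hkn, f, rfl⟩, rfl⟩
      refine ⟨k, hk, hkn, f, ?_⟩
      rw [cycleProd_smul, Real.mul_rpow (by positivity) (cycleProd_nonneg hA hk f),
        Real.pow_rpow_inv_natCast hc hk.ne']
  rw [mtSpecRad_eq_sSup_cycleGeomMeans, hmeans, Real.sSup_smul_of_nonneg hc]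
  rfl

theorem pathWeight_le_one_of_mtSpecRad_le_one (hA1 : mtSpecRad A ≤ 1) (g : ℕ → Fin n) {a b : ℕ}
    (hab : a < b) (hbn : b - a ≤ n) (hg : g a = g b) : pathWeight A g a b ≤ 1 := by
  have hk : 0 < b - a := Nat.sub_pos_of_lt hab
  have hcycle : pathWeight A g a b = cycleProd A hk fun t => g (a + t) := by
    rw [pathWeight, Finset.prod_Ico_eq_prod_range, ← Fin.prod_univ_eq_prod_range]
    refine Finset.prod_congr rfl fun t _ => congrArg _ ?_
    show g (a + t + 1) = g (a + ((t : ℕ) + 1) % (b - a))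
    rcases Nat.lt_or_ge ((t : ℕ) + 1) (b - a) with ht | ht
    · rw [Nat.mod_eq_of_lt ht, add_assoc]
    · have ht : (t : ℕ) + 1 = b - a := by omega
      simp only [ht, Nat.mod_self, add_zero, hg]
      congr 1
      omega
  rw [hcycle]
  exact (cycleProd_le_mtSpecRad_pow hA hk hbn _).trans
    (pow_le_one₀ ((hA (g a) (g a)).trans (diag_le_mtSpecRad hA _)) hA1)

end SpectralRadius

section KleeneStar

variable {C : Matrix (Fin n) (Fin n) ℝ}

theorem mtPow_le_mtStar_of_lt {m : ℕ} (hm : m < n) (i j : Fin n) :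
    mtPow C m i j ≤ mtStar C i j :=
  le_ciSup (Finite.bddAbove_range fun k : Fin n => mtPow C k i j) ⟨m, hm⟩

theorem one_le_mtStar_self (i : Fin n) : 1 ≤ mtStar C i i := by
  simpa [mtPow_zero_apply] using mtPow_le_mtStar_of_lt (C := C) i.pos i i

theorem exists_mtStar_eq (i j : Fin n) : ∃ m < n, mtStar C i j = mtPow C m i j :=
  haveI : Nonempty (Fin n) := ⟨i⟩
  (exists_eq_ciSup_of_finite (f := fun k : Fin n => mtPow C k i j)).elim fun m hm =>
    ⟨m, m.isLt, hm.symm⟩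

theorem exists_lt_le_map_eq (g : ℕ → Fin n) : ∃ a b, a < b ∧ b ≤ n ∧ g a = g b := by
  obtain ⟨a, b, hne, hab⟩ :=
    Fintype.exists_ne_map_eq_of_card_lt (fun t : Fin (n + 1) => g t) (by simp)
  rcases Fin.val_injective.ne hne |>.lt_or_gt with h | h
  · exact ⟨a, b, h, Nat.le_of_lt_succ b.isLt, hab⟩
  · exact ⟨b, a, h, Nat.le_of_lt_succ a.isLt, hab.symm⟩

variable (hC : ∀ i j, 0 ≤ C i j)
include hC

theorem mtPow_le_mtStar (hC1 : mtSpecRad C ≤ 1) (m : ℕ) (i j : Fin n) :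
    mtPow C m i j ≤ mtStar C i j := by
  induction m using Nat.strong_induction_on generalizing i j with
  | _ m ih =>
  rcases lt_or_ge m n with hmn | hnm
  · exact mtPow_le_mtStar_of_lt hmn i j
  obtain ⟨m, rfl⟩ := Nat.exists_eq_add_one.mpr (i.pos.trans_le hnm)
  obtain ⟨g, rfl, rfl, hg⟩ := exists_mtPow_le_pathWeight hC m i j
  obtain ⟨a, b, hab, hbn, hgab⟩ := exists_lt_le_map_eq g
  have hcycle := pathWeight_le_one_of_mtSpecRad_le_one hC hC1 g hab (by omega) hgab
  calc mtPow C (m + 1) (g 0) (g (m + 1))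
      ≤ pathWeight C g 0 a * pathWeight C g a b * pathWeight C g b (m + 1) := by
        rwa [pathWeight_mul (Nat.zero_le a) hab.le, pathWeight_mul (Nat.zero_le b) (by omega)]
    _ ≤ pathWeight C g 0 a * pathWeight C g b (m + 1) :=
        mul_le_mul_of_nonneg_right (mul_le_of_le_one_right (pathWeight_nonneg hC g 0 a) hcycle)
          (pathWeight_nonneg hC g b (m + 1))
    _ ≤ mtPow C a (g 0) (g a) * mtPow C (m + 1 - b) (g b) (g (m + 1)) := by
        gcongr
        · exact pathWeight_nonneg hC g b (m + 1)
        · exact mtPow_nonneg hC _ _ _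
        · exact pathWeight_le_mtPow hC g (Nat.zero_le a)
        · exact pathWeight_le_mtPow hC g (by omega)
    _ ≤ mtPow C (a + (m + 1 - b)) (g 0) (g (m + 1)) := hgab ▸ mtPow_mul_mtPow_le hC _ _ _ _ _
    _ ≤ mtStar C (g 0) (g (m + 1)) := ih _ (by omega) _ _

theorem mul_mtStar_le (hC1 : mtSpecRad C ≤ 1) (i j k : Fin n) :
    C i j * mtStar C j k ≤ mtStar C i k := by
  obtain ⟨m, -, hm⟩ := exists_mtStar_eq (C := C) j k
  calc C i j * mtStar C j k = mtPow C 1 i j * mtPow C m j k := by rw [hm, mtPow_one_apply hC]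
    _ ≤ mtPow C (1 + m) i k := mtPow_mul_mtPow_le hC _ _ _ _ _
    _ ≤ mtStar C i k := mtPow_le_mtStar hC hC1 _ i k

theorem mtPow_mul_le_of_mul_le {x : Fin n → ℝ} (hx : ∀ i, 0 ≤ x i)
    (h : ∀ i j, C i j * x j ≤ x i) (m : ℕ) (i j : Fin n) : mtPow C m i j * x j ≤ x i := by
  induction m generalizing j with
  | zero =>
    rw [mtPow_zero_apply]
    split_ifs with hij
    · rw [hij, one_mul]
    · rw [zero_mul]; exact hx i
  | succ m ih =>
    obtain ⟨k, hk⟩ := exists_mtPow_succ_eq (C := C) m i j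
    calc mtPow C (m + 1) i j * x j = mtPow C m i k * (C k j * x j) := by rw [hk, mul_assoc]
      _ ≤ mtPow C m i k * x k := by gcongr; exacts [mtPow_nonneg hC m i k, h k j]
      _ ≤ x i := ih k

theorem mtStar_mul_le_of_mul_le {x : Fin n → ℝ} (hx : ∀ i, 0 ≤ x i)
    (h : ∀ i j, C i j * x j ≤ x i) (i j : Fin n) : mtStar C i j * x j ≤ x i := by
  obtain ⟨m, -, hm⟩ := exists_mtStar_eq (C := C) i j
  rw [hm]
  exact mtPow_mul_le_of_mul_le hC hx h m i j

end KleeneStar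

theorem mtVecMul_le_iff {S : Matrix (Fin n) (Fin n) ℝ} {u v : Fin n → ℝ} :
    mtVecMul S u ≤ v ↔ ∀ i j, S i j * u j ≤ v i :=
  forall_congr' fun i =>
    haveI : Nonempty (Fin n) := ⟨i⟩
    ciSup_le_iff (Finite.bddAbove_range _)

theorem le_mtVecMul (S : Matrix (Fin n) (Fin n) ℝ) (u : Fin n → ℝ) (i j : Fin n) :
    S i j * u j ≤ mtVecMul S u i :=
  le_ciSup (Finite.bddAbove_range fun j => S i j * u j) j

theorem mtVecMul_le_self_iff_exists_eq_mtVecMul_mtStar {C : Matrix (Fin n) (Fin n) ℝ}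
    (hC : ∀ i j, 0 ≤ C i j) (hC1 : mtSpecRad C ≤ 1) {x : Fin n → ℝ} (hx : ∀ i, 0 < x i) :
    mtVecMul C x ≤ x ↔ ∃ u : Fin n → ℝ, (∀ i, 0 < u i) ∧ x = mtVecMul (mtStar C) u := by
  rw [mtVecMul_le_iff]
  constructor
  · intro h
    refine ⟨x, hx, funext fun i => le_antisymm ?_ ?_⟩
    · calc x i ≤ mtStar C i i * x i := le_mul_of_one_le_left (hx i).le (one_le_mtStar_self i)
        _ ≤ mtVecMul (mtStar C) x i := le_mtVecMul _ x i i
    · exact mtVecMul_le_iff.mpr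
        (fun i j => mtStar_mul_le_of_mul_le hC (fun k => (hx k).le) h i j) i
  · rintro ⟨u, hu, rfl⟩ i j
    rw [mtVecMul, Real.mul_iSup_of_nonneg (hC i j)]
    have : Nonempty (Fin n) := ⟨i⟩
    refine ciSup_le fun k => ?_
    calc C i j * (mtStar C j k * u k) ≤ mtStar C i k * u k := by
          rw [← mul_assoc]; gcongr; exacts [(hu k).le, mul_mtStar_le hC hC1 i j k]
      _ ≤ mtVecMul (mtStar C) u i := le_mtVecMul _ u i k

section Approximation

variable {A B : Matrix (Fin n) (Fin n) ℝ} {x : Fin n → ℝ}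

theorem one_le_max_inv {a : ℝ} (ha : 0 < a) : 1 ≤ max a a⁻¹ := by
  rcases le_total 1 a with h | h
  · exact le_max_of_le_left h
  · exact le_max_of_le_right ((one_le_inv₀ ha).mpr h)

theorem nonneg_of_eq_max_inv (hA : ∀ i j, 0 ≤ A i j) (hB : ∀ i j, B i j = max (A i j) (A j i)⁻¹)
    (i j : Fin n) : 0 ≤ B i j :=
  hB i j ▸ (hA i j).trans (le_max_left _ _)

theorem mtRho_le_iff [NeZero n] (hA : ∀ i j, 0 ≤ A i j)
    (hB : ∀ i j, B i j = max (A i j) (A j i)⁻¹) (hx : ∀ i, 0 < x i) {c : ℝ} :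
    mtRho A x ≤ c ↔ ∀ i j, B i j * x j ≤ c * x i := by
  have hsup : ∀ i j, A i j * x j / x i ≤ ⨆ p : Fin n × Fin n, A p.1 p.2 * x p.2 / x p.1 :=
    fun i j =>
      le_ciSup (Finite.bddAbove_range fun p : Fin n × Fin n => A p.1 p.2 * x p.2 / x p.1) (i, j)
  have hbdd : BddAbove { r : ℝ | ∃ i j, 0 < A i j ∧ r = x i / (A i j * x j) } :=
    ((Set.finite_range fun p : Fin n × Fin n => x p.1 / (A p.1 p.2 * x p.2)).subset
      (by rintro _ ⟨i, j, -, rfl⟩; exact ⟨(i, j), rfl⟩)).bddAbove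
  constructor
  · intro h i j
    have hAx : ∀ i j, A i j * x j ≤ c * x i := fun i j =>
      (div_le_iff₀ (hx i)).mp ((hsup i j).trans ((le_max_left _ _).trans h))
    have hcx : 0 ≤ c * x i := (mul_nonneg (hA i i) (hx i).le).trans (hAx i i)
    rw [hB, max_mul_of_nonneg _ _ (hx j).le, max_le_iff]
    refine ⟨hAx i j, ?_⟩
    rcases (hA j i).eq_or_lt with hzero | hpos
    · rwa [← hzero, inv_zero, zero_mul]
    · have hmem : x j / (A j i * x i) ≤ c :=
        (le_csSup hbdd ⟨j, i, hpos, rfl⟩).trans ((le_max_right _ _).trans h)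
      rw [div_le_iff₀ (mul_pos hpos (hx i))] at hmem
      rw [inv_mul_le_iff₀ hpos]
      linarith
  · intro h
    have hc : 0 ≤ c := by
      have := h 0 0
      nlinarith [nonneg_of_eq_max_inv hA hB 0 0, hx 0]
    refine max_le (ciSup_le fun p => ?_) (Real.sSup_le ?_ hc)
    · rw [div_le_iff₀ (hx p.1)]
      exact (mul_le_mul_of_nonneg_right (hB p.1 p.2 ▸ le_max_left _ _) (hx p.2).le).trans
        (h p.1 p.2)
    · rintro _ ⟨i, j, hpos, rfl⟩
      rw [div_le_iff₀ (mul_pos hpos (hx j))]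
      calc x i = A i j * ((A i j)⁻¹ * x i) := by field_simp
        _ ≤ A i j * (B j i * x i) := by
            gcongr
            · exact (hx i).le
            · exact hB j i ▸ le_max_right _ _
        _ ≤ A i j * (c * x j) := mul_le_mul_of_nonneg_left (h j i) hpos.le
        _ = c * (A i j * x j) := by ring

theorem mtSpecRad_le_mtRho [NeZero n] (hA : ∀ i j, 0 ≤ A i j)
    (hB : ∀ i j, B i j = max (A i j) (A j i)⁻¹) (hx : ∀ i, 0 < x i) :
    mtSpecRad B ≤ mtRho A x :=
  mtSpecRad_le_of_mul_le (nonneg_of_eq_max_inv hA hB) hx ((mtRho_le_iff hA hB hx).mp le_rfl)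

end Approximation

/-- A positive vector `x` satisfies `ρ(A, x) = μ` (i.e. minimizes
`ρ(A, ·)`) iff `x = (μ⁻¹ B)^* ⊗ u` for some positive `u`, where
`B_{ij} = max(A_{ij}, (A_{ji})⁻)` and `μ = λ(B)`. -/
theorem mt_rho_minimizers {n : ℕ} (hn : 1 ≤ n) (A : Matrix (Fin n) (Fin n) ℝ)
    (hA : ∀ i j, 0 ≤ A i j) (hAA : ∀ i j, 0 < A i j ∨ 0 < A j i)
    (B : Matrix (Fin n) (Fin n) ℝ) (hB : ∀ i j, B i j = max (A i j) (A j i)⁻¹)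
    (μ : ℝ) (hμ : μ = mtSpecRad B) (x : Fin n → ℝ) (hx : ∀ i, 0 < x i) :
    mtRho A x = μ ↔
      ∃ u : Fin n → ℝ, (∀ i, 0 < u i) ∧ x = mtVecMul (mtStar (μ⁻¹ • B)) u := by
  have : NeZero n := ⟨by omega⟩
  have hBnn := nonneg_of_eq_max_inv hA hB
  have hμpos : 0 < μ := by
    have hB00 : 1 ≤ B 0 0 := hB 0 0 ▸ one_le_max_inv ((hAA 0 0).elim id id)
    exact hμ ▸ one_pos.trans_le (hB00.trans (diag_le_mtSpecRad hBnn 0))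
  have hC : ∀ i j, 0 ≤ (μ⁻¹ • B) i j := fun i j => mul_nonneg (inv_nonneg.mpr hμpos.le) (hBnn i j)
  have hC1 : mtSpecRad (μ⁻¹ • B) ≤ 1 := by
    rw [mtSpecRad_smul hBnn (inv_nonneg.mpr hμpos.le), ← hμ, inv_mul_cancel₀ hμpos.ne']
  have hminimizer : mtRho A x = μ ↔ mtVecMul (μ⁻¹ • B) x ≤ x := by
    have hlower : μ ≤ mtRho A x := hμ ▸ mtSpecRad_le_mtRho hA hB hx
    rw [← hlower.ge_iff_eq', mtRho_le_iff hA hB hx, mtVecMul_le_iff]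
    simp only [Matrix.smul_apply, smul_eq_mul, mul_assoc, inv_mul_le_iff₀ hμpos]
  rw [hminimizer]
  exact mtVecMul_le_self_iff_exists_eq_mtVecMul_mtStar hC hC1 hx

end
end

section
/- Let n ≥ 1 and let A be an n×n real matrix. Define B by B_{ij} = max(A_{ij}, −A_{ji}) and let μ = λ(B) be the maximum cycle mean of B. Then the minimum over all vectors x ∈ ℝ^n of the Chebyshev distance max_{i,j} |A_{ij} − (x_i − x_j)| equals μ, and the minimum is attained. -/
open scoped BigOperators

noncomputable section

/-!
If `|A i j - (x i - x j)| ≤ d` for all `i, j`, then also `-A j i ≤ d + x i - x j`, so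
`B i j ≤ d + x i - x j`; along a cycle the potential terms telescope and every cycle mean of `B`
is at most `d`. Conversely `C = B - μ` has no cycle of positive weight. Deleting cycles shows that
no walk beats the best walk of length at most `n`, so `x i`, the supremum of the weights of the
walks starting at `i`, is finite, and prepending the edge `i → j` gives `C i j + x j ≤ x i`. That
is `B i j ≤ μ + x i - x j`, i.e. the Chebyshev distance of `A` to `(x i - x j)` is at most `μ`.
-/

namespace Matrix

variable {ι : Type*}

def walkWeight (C : Matrix ι ι ℝ) (m : ℕ) (g : ℕ → ι) : ℝ :=
  ∑ t ∈ Finset.range m, C (g t) (g (t + 1))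

variable (C : Matrix ι ι ℝ)

@[simp]
theorem walkWeight_zero (g : ℕ → ι) : C.walkWeight 0 g = 0 := by
  simp [walkWeight]

theorem walkWeight_add (p q : ℕ) (g : ℕ → ι) :
    C.walkWeight (p + q) g = C.walkWeight p g + C.walkWeight q (fun t => g (p + t)) := by
  simp only [walkWeight, Finset.sum_range_add, add_assoc]

theorem walkWeight_congr {m : ℕ} {g g' : ℕ → ι} (h : ∀ t ≤ m, g t = g' t) :
    C.walkWeight m g = C.walkWeight m g' :=
  Finset.sum_congr rfl fun t ht => by
    rw [Finset.mem_range] at ht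
    rw [h t ht.le, h (t + 1) ht]

theorem walkWeight_sub_const (d : ℝ) (m : ℕ) (g : ℕ → ι) :
    walkWeight (fun i j => C i j - d) m g = C.walkWeight m g - m * d := by
  simp [walkWeight, Finset.sum_sub_distrib]

theorem walkWeight_le_of_le_add_sub {d : ℝ} {x : ι → ℝ} (h : ∀ i j, C i j ≤ d + x i - x j)
    {m : ℕ} {g : ℕ → ι} (hg : g m = g 0) : C.walkWeight m g ≤ m * d :=
  calc C.walkWeight m g ≤ ∑ t ∈ Finset.range m, (d + (x (g t) - x (g (t + 1)))) :=
        Finset.sum_le_sum fun t _ => (h _ _).trans_eq (add_sub_assoc _ _ _)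
    _ = m * d := by
        rw [Finset.sum_add_distrib, Finset.sum_range_sub' (fun t => x (g t)), hg]
        simp

/-- Cutting the closed segment between the times `p` and `p + d` out of a walk. -/
theorem walkWeight_eq_splice {p d : ℕ} {g : ℕ → ι} (hg : g p = g (p + d)) (r : ℕ) :
    C.walkWeight (p + d + r) g =
      C.walkWeight (p + r) (fun t => if t < p then g t else g (t + d)) +
        C.walkWeight d (fun t => g (p + t)) := by
  have hprefix : C.walkWeight p (fun t => if t < p then g t else g (t + d)) = C.walkWeight p g :=
    C.walkWeight_congr fun t ht => by
      rcases ht.lt_or_eq with ht | rfl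
      · simp [ht]
      · simp [hg]
  have hsuffix : (fun t => (if p + t < p then g (p + t) else g (p + t + d))) =
      fun t => g (p + d + t) := by
    funext t
    simp only [Nat.not_lt.2 (Nat.le_add_right p t), if_false]
    ring_nf
  rw [walkWeight_add, walkWeight_add, walkWeight_add, hprefix, hsuffix]
  ring

theorem exists_lt_le_card_eq [Fintype ι] (g : ℕ → ι) :
    ∃ p q, p < q ∧ q ≤ Fintype.card ι ∧ g p = g q := by
  obtain ⟨a, b, hab, hg⟩ :=
    Fintype.exists_ne_map_eq_of_card_lt (fun t : Fin (Fintype.card ι + 1) => g t) (by simp)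
  rcases Fin.lt_or_lt_of_ne hab with h | h
  · exact ⟨a, b, h, Nat.lt_succ_iff.1 b.isLt, hg⟩
  · exact ⟨b, a, h, Nat.lt_succ_iff.1 a.isLt, hg.symm⟩

def CycleWeightsNonpos [Fintype ι] : Prop :=
  ∀ m, 0 < m → m ≤ Fintype.card ι → ∀ g : ℕ → ι, g m = g 0 → C.walkWeight m g ≤ 0

variable [Fintype ι] {C}

theorem exists_walkWeight_le_of_cycleWeightsNonpos (hC : C.CycleWeightsNonpos) (k : ℕ)
    (g : ℕ → ι) : ∃ m ≤ Fintype.card ι, ∃ g' : ℕ → ι, g' 0 = g 0 ∧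
      C.walkWeight k g ≤ C.walkWeight m g' := by
  induction k using Nat.strong_induction_on generalizing g with
  | _ k ih =>
    by_cases hk : k ≤ Fintype.card ι
    · exact ⟨k, hk, g, rfl, le_rfl⟩
    obtain ⟨p, q, hpq, hq, hg⟩ := exists_lt_le_card_eq g
    obtain ⟨d, rfl⟩ := Nat.exists_eq_add_of_le hpq.le
    obtain ⟨r, rfl⟩ := Nat.exists_eq_add_of_le (hq.trans (Nat.le_of_not_le hk))
    have hcycle : C.walkWeight d (fun t => g (p + t)) ≤ 0 :=
      hC d (by omega) (by omega) _ (by simpa using hg.symm)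
    obtain ⟨m, hm, g', hg'0, hle⟩ :=
      ih (p + r) (by omega) (fun t => if t < p then g t else g (t + d))
    refine ⟨m, hm, g', hg'0.trans ?_, ?_⟩
    · rcases p.eq_zero_or_pos with rfl | hp
      · simpa using hg.symm
      · simp [hp]
    · rw [C.walkWeight_eq_splice hg r]
      linarith

variable (C) in
theorem walkWeight_le_mul_sum_abs (m : ℕ) (g : ℕ → ι) :
    C.walkWeight m g ≤ m * ∑ p : ι × ι, |C p.1 p.2| := by
  have hentry : ∀ i j, C i j ≤ ∑ p : ι × ι, |C p.1 p.2| := fun i j =>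
    (le_abs_self _).trans <| Finset.single_le_sum (f := fun p : ι × ι => |C p.1 p.2|)
      (fun _ _ => abs_nonneg _) (Finset.mem_univ (i, j))
  simpa [walkWeight] using Finset.sum_le_sum fun t (_ : t ∈ Finset.range m) => hentry _ _

theorem bddAbove_walkWeight_of_cycleWeightsNonpos (hC : C.CycleWeightsNonpos) :
    BddAbove (Set.range fun w : ℕ × (ℕ → ι) => C.walkWeight w.1 w.2) := by
  refine ⟨Fintype.card ι * ∑ p : ι × ι, |C p.1 p.2|, ?_⟩
  rintro _ ⟨⟨k, g⟩, rfl⟩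
  obtain ⟨m, hm, g', -, hle⟩ := exists_walkWeight_le_of_cycleWeightsNonpos hC k g
  exact hle.trans <| (C.walkWeight_le_mul_sum_abs m g').trans <|
    mul_le_mul_of_nonneg_right (by exact_mod_cast hm)
      (Finset.sum_nonneg fun _ _ => abs_nonneg _)

theorem exists_le_sub_of_cycleWeightsNonpos (hC : C.CycleWeightsNonpos) :
    ∃ x : ι → ℝ, ∀ i j, C i j ≤ x i - x j := by
  set x : ι → ℝ := fun i => sSup {w | ∃ m g, g 0 = i ∧ C.walkWeight m g = w}
  have hbdd : ∀ i, BddAbove {w | ∃ m g, g 0 = i ∧ C.walkWeight m g = w} := fun i =>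
    (bddAbove_walkWeight_of_cycleWeightsNonpos hC).mono <| by
      rintro _ ⟨m, g, -, rfl⟩
      exact ⟨(m, g), rfl⟩
  refine ⟨x, fun i j => le_sub_iff_add_le'.2 <| le_sub_iff_add_le.1 ?_⟩
  refine csSup_le ⟨0, 0, fun _ => j, rfl, by simp⟩ ?_
  rintro _ ⟨m, g, rfl, rfl⟩
  rw [le_sub_iff_add_le']
  refine le_csSup (hbdd i) ⟨1 + m, fun t => if t = 0 then i else g (t - 1), rfl, ?_⟩
  rw [walkWeight_add]
  simp [walkWeight]

end Matrix

open Matrix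

section CycleMean

variable {n : ℕ}

theorem cycleSum_eq_walkWeight (B : Matrix (Fin n) (Fin n) ℝ) {k : ℕ} (hk : 0 < k)
    (f : Fin k → Fin n) :
    ∑ t : Fin k, B (f t) (f ⟨((t : ℕ) + 1) % k, Nat.mod_lt _ hk⟩) =
      B.walkWeight k (fun t => f ⟨t % k, Nat.mod_lt _ hk⟩) := by
  rw [walkWeight, ← Fin.sum_univ_eq_sum_range (fun t => B (f ⟨t % k, _⟩) (f ⟨(t + 1) % k, _⟩))]
  exact Finset.sum_congr rfl fun t _ => by simp [Nat.mod_eq_of_lt t.isLt]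

theorem walkWeight_le_mul_mpCycleMean (B : Matrix (Fin n) (Fin n) ℝ) {m : ℕ} (hm : 0 < m)
    (hmn : m ≤ n) {g : ℕ → Fin n} (hg : g m = g 0) :
    B.walkWeight m g ≤ m * mpCycleMean B := by
  have hclosed : B.walkWeight m g = B.walkWeight m (fun t => g (t % m)) :=
    B.walkWeight_congr fun t ht => by
      rcases ht.lt_or_eq with ht | rfl
      · rw [Nat.mod_eq_of_lt ht]
      · rw [Nat.mod_self, hg]
  have hbdd : ∀ k (hk : 0 < k) (f : Fin k → Fin n),
      (∑ t : Fin k, B (f t) (f ⟨((t : ℕ) + 1) % k, Nat.mod_lt _ hk⟩)) / k ≤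
        ∑ p : Fin n × Fin n, |B p.1 p.2| := fun k hk f => by
    rw [div_le_iff₀' (by exact_mod_cast hk), cycleSum_eq_walkWeight B hk]
    exact B.walkWeight_le_mul_sum_abs k _
  rw [← div_le_iff₀' (by exact_mod_cast hm)]
  refine le_csSup ⟨∑ p : Fin n × Fin n, |B p.1 p.2|, ?_⟩ ⟨m, hm, hmn, fun t => g t, ?_⟩
  · rintro _ ⟨k, hk, -, f, rfl⟩
    exact hbdd k hk f
  · rw [cycleSum_eq_walkWeight B hm, hclosed]

theorem mpCycleMean_le_of_le_add_sub {B : Matrix (Fin n) (Fin n) ℝ} {d : ℝ} (hd : 0 ≤ d)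
    {x : Fin n → ℝ} (h : ∀ i j, B i j ≤ d + x i - x j) : mpCycleMean B ≤ d := by
  refine Real.sSup_le ?_ hd
  rintro _ ⟨k, hk, -, f, rfl⟩
  rw [div_le_iff₀' (by exact_mod_cast hk), cycleSum_eq_walkWeight B hk]
  exact B.walkWeight_le_of_le_add_sub h (by simp)

theorem exists_le_mpCycleMean_add_sub (B : Matrix (Fin n) (Fin n) ℝ) :
    ∃ x : Fin n → ℝ, ∀ i j, B i j ≤ mpCycleMean B + x i - x j := by
  have hC : CycleWeightsNonpos fun i j => B i j - mpCycleMean B := fun m hm hmn g hg => by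
    rw [walkWeight_sub_const, sub_nonpos]
    exact walkWeight_le_mul_mpCycleMean B hm (by simpa using hmn) hg
  obtain ⟨x, hx⟩ := exists_le_sub_of_cycleWeightsNonpos hC
  exact ⟨x, fun i j => by linarith [hx i j]⟩

theorem forall_abs_sub_le_iff_of_eq_max_neg {A B : Matrix (Fin n) (Fin n) ℝ}
    (hB : ∀ i j, B i j = max (A i j) (-(A j i))) (x : Fin n → ℝ) (d : ℝ) :
    (∀ i j, |A i j - (x i - x j)| ≤ d) ↔ ∀ i j, B i j ≤ d + x i - x j := by
  simp only [hB, abs_le, max_le_iff]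
  refine ⟨fun h i j => ⟨?_, ?_⟩, fun h i j => ⟨?_, ?_⟩⟩
  · linarith [(h i j).2]
  · linarith [(h j i).1]
  · linarith [(h j i).2]
  · linarith [(h i j).1]

end CycleMean

theorem mp_cheb_min_general {n : ℕ} (A : Matrix (Fin n) (Fin n) ℝ)
    (B : Matrix (Fin n) (Fin n) ℝ) (hB : ∀ i j, B i j = max (A i j) (-(A j i)))
    (μ : ℝ) (hμ : μ = mpCycleMean B) :
    IsLeast { y : ℝ | ∃ x : Fin n → ℝ,
        y = ⨆ p : Fin n × Fin n, |A p.1 p.2 - (x p.1 - x p.2)| } μ := by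
  have hlower : ∀ x : Fin n → ℝ, μ ≤ ⨆ p : Fin n × Fin n, |A p.1 p.2 - (x p.1 - x p.2)| :=
    fun x => hμ ▸ mpCycleMean_le_of_le_add_sub (Real.iSup_nonneg fun _ => abs_nonneg _) <|
      (forall_abs_sub_le_iff_of_eq_max_neg hB x _).1 fun i j =>
        le_ciSup (f := fun p : Fin n × Fin n => |A p.1 p.2 - (x p.1 - x p.2)|)
          (Set.finite_range _).bddAbove (i, j)
  obtain ⟨x, hx⟩ := exists_le_mpCycleMean_add_sub B
  have hxμ := (forall_abs_sub_le_iff_of_eq_max_neg hB x μ).2 (hμ ▸ hx)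
  have hμ0 : 0 ≤ μ := by
    rcases n.eq_zero_or_pos with rfl | hn
    · simp [hμ, mpCycleMean]
    · simpa using (abs_nonneg _).trans (hxμ ⟨0, hn⟩ ⟨0, hn⟩)
  exact ⟨⟨x, le_antisymm (hlower x) (Real.iSup_le (fun p => hxμ p.1 p.2) hμ0)⟩,
    fun _ ⟨x', hy⟩ => hy ▸ hlower x'⟩

/-- For `B_{ij} = max(A_{ij}, −A_{ji})`, the minimum over `x ∈ ℝⁿ` of the
Chebyshev distance `max_{i,j} |A_{ij} − (x_i − x_j)|` equals the maximum cycle mean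
`μ = λ(B)`, and it is attained. -/
theorem mp_cheb_min {n : ℕ} (hn : 1 ≤ n) (A : Matrix (Fin n) (Fin n) ℝ)
    (B : Matrix (Fin n) (Fin n) ℝ) (hB : ∀ i j, B i j = max (A i j) (-(A j i)))
    (μ : ℝ) (hμ : μ = mpCycleMean B) :
    IsLeast { y : ℝ | ∃ x : Fin n → ℝ,
        y = ⨆ p : Fin n × Fin n, |A p.1 p.2 - (x p.1 - x p.2)| } μ :=
  mp_cheb_min_general A B hB μ hμ

end
end

section
/- Let n ≥ 1 and let A be an n×n real matrix. Define B by B_{ij} = max(A_{ij}, −A_{ji}) and let μ = λ(B) be the maximum cycle mean of B. A vector x ∈ ℝ^n satisfies max_{i,j} |A_{ij} − (x_i − x_j)| = μ (i.e., x minimizes this Chebyshev distance over ℝ^n) if and only if there exists u ∈ ℝ^n such that x = (B − μ)^* ⊗ u in max-plus arithmetic, where B − μ denotes the matrix with entries B_{ij} − μ. -/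
open scoped BigOperators

noncomputable section

/-!
Since `B i j = max (A i j) (-A j i)`, the Chebyshev distance equals `max_{i,j} (B i j + x j - x i)`,
and telescoping along a cycle shows that this is at least `λ(B)`. So `x` is a minimizer exactly
when it is a max-plus subeigenvector of `S = B - μ`: `S i j + x j ≤ x i` for all `i, j`.
Every cycle of `S` has nonpositive weight, so removing cycles shortens any walk to one with fewer
than `n` edges without decreasing its weight. Hence `S^*` dominates every power of `S`, which gives
`S ⊗ S^* ≤ S^*`: every `S^* ⊗ u` is a subeigenvector. Conversely a subeigenvector `x` satisfies
`S^* ⊗ x = x`.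
-/

lemma List.exists_append_cons_append_cons_of_not_nodup {α : Type*} {l : List α}
    (h : ¬ l.Nodup) : ∃ (a : α) (l₁ l₂ l₃ : List α), l = l₁ ++ a :: l₂ ++ a :: l₃ := by
  induction l with
  | nil => exact absurd List.nodup_nil h
  | cons b l ih =>
    by_cases hb : b ∈ l
    · obtain ⟨l₂, l₃, rfl⟩ := List.append_of_mem hb
      exact ⟨b, [], l₂, l₃, rfl⟩
    · obtain ⟨a, l₁, l₂, l₃, rfl⟩ := ih fun hl => h (List.nodup_cons.mpr ⟨hb, hl⟩)
      exact ⟨a, b :: l₁, l₂, l₃, rfl⟩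

section

variable {n : ℕ}

def walkWeight (M : Matrix (Fin n) (Fin n) ℝ) : Fin n → List (Fin n) → Fin n → ℝ
  | i, [], k => M i k
  | i, j :: l, k => M i j + walkWeight M j l k

@[simp] lemma walkWeight_nil (M : Matrix (Fin n) (Fin n) ℝ) (i k : Fin n) :
    walkWeight M i [] k = M i k := rfl

@[simp] lemma walkWeight_cons (M : Matrix (Fin n) (Fin n) ℝ) (i j : Fin n) (l : List (Fin n))
    (k : Fin n) : walkWeight M i (j :: l) k = M i j + walkWeight M j l k := rfl

lemma walkWeight_append_cons (M : Matrix (Fin n) (Fin n) ℝ) (i a k : Fin n)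
    (l₁ l₂ : List (Fin n)) :
    walkWeight M i (l₁ ++ a :: l₂) k = walkWeight M i l₁ a + walkWeight M a l₂ k := by
  induction l₁ generalizing i with
  | nil => rfl
  | cons j l ih => simp [ih, add_assoc]

lemma walkWeight_append_cons_append_cons (M : Matrix (Fin n) (Fin n) ℝ) (i b k : Fin n)
    (l₁ l₂ l₃ : List (Fin n)) :
    walkWeight M i (l₁ ++ b :: l₂ ++ b :: l₃) k =
      walkWeight M i (l₁ ++ b :: l₃) k + walkWeight M b l₂ b := by
  simp only [walkWeight_append_cons]
  ring

lemma walkWeight_eq_sum (M : Matrix (Fin n) (Fin n) ℝ) (i : Fin n) (l : List (Fin n))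
    (k : Fin n) :
    walkWeight M i l k = ∑ t : Fin (l.length + 1), M (i :: l)[t] (l ++ [k])[t] := by
  induction l generalizing i with
  | nil => simp
  | cons j l ih => simp [Fin.sum_univ_succ, ih]

lemma walkWeight_sub_const (M : Matrix (Fin n) (Fin n) ℝ) (c : ℝ) (i : Fin n)
    (l : List (Fin n)) (k : Fin n) :
    walkWeight (Matrix.of fun i j => M i j - c) i l k =
      walkWeight M i l k - (l.length + 1) * c := by
  induction l generalizing i with
  | nil => simp
  | cons j l ih => simp [ih]; ring

lemma walkWeight_add_le {M : Matrix (Fin n) (Fin n) ℝ} {x : Fin n → ℝ}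
    (hx : ∀ i j, M i j + x j ≤ x i) (i : Fin n) (l : List (Fin n)) (k : Fin n) :
    walkWeight M i l k + x k ≤ x i := by
  induction l generalizing i with
  | nil => exact hx i k
  | cons j l ih => linarith [ih j, hx i j, walkWeight_cons M i j l k]

lemma walkWeight_le_mpPow (M : Matrix (Fin n) (Fin n) ℝ) (i : Fin n) (l : List (Fin n))
    (k : Fin n) : walkWeight M i l k ≤ mpPow M l.length i k := by
  induction l using List.reverseRecOn generalizing k with
  | nil => rfl
  | append_singleton l j ih =>
    rw [walkWeight_append_cons, List.length_append, List.length_singleton]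
    exact Finite.le_ciSup_of_le j (by simpa using ih j)

lemma exists_walkWeight_eq_mpPow (M : Matrix (Fin n) (Fin n) ℝ) (m : ℕ) (i k : Fin n) :
    ∃ l : List (Fin n), l.length = m ∧ walkWeight M i l k = mpPow M m i k := by
  induction m generalizing k with
  | zero => exact ⟨[], rfl, rfl⟩
  | succ m ih =>
    have : Nonempty (Fin n) := ⟨i⟩
    obtain ⟨j, hj⟩ := exists_eq_ciSup_of_finite (f := fun j => mpPow M m i j + M j k)
    obtain ⟨l, rfl, hl⟩ := ih j
    refine ⟨l ++ [j], by simp, ?_⟩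
    rw [walkWeight_append_cons, hl]
    exact hj

/-- `λ(M) ≤ 0`, phrased through closed walks with at most `n` edges. -/
def HasNonposCycles (M : Matrix (Fin n) (Fin n) ℝ) : Prop :=
  ∀ (a : Fin n) (l : List (Fin n)), l.length < n → walkWeight M a l a ≤ 0

theorem HasNonposCycles.walkWeight_self_nonpos {M : Matrix (Fin n) (Fin n) ℝ}
    (hM : HasNonposCycles M) (a : Fin n) (l : List (Fin n)) : walkWeight M a l a ≤ 0 := by
  by_cases hl : l.length < n
  · exact hM a l hl
  have hdup : ¬ (a :: l).Nodup := fun hnd => by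
    have := hnd.length_le_card
    simp only [List.length_cons, Fintype.card_fin] at this
    omega
  rw [List.nodup_cons, not_and_or, not_not] at hdup
  rcases hdup with ha | hdup
  · obtain ⟨l₁, l₂, hsplit⟩ := List.append_of_mem ha
    rw [hsplit, walkWeight_append_cons]
    exact add_nonpos (hM.walkWeight_self_nonpos a l₁) (hM.walkWeight_self_nonpos a l₂)
  · obtain ⟨b, l₁, l₂, l₃, hsplit⟩ := List.exists_append_cons_append_cons_of_not_nodup hdup
    rw [hsplit, walkWeight_append_cons_append_cons]
    exact add_nonpos (hM.walkWeight_self_nonpos a _) (hM.walkWeight_self_nonpos b l₂)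
termination_by l.length
decreasing_by all_goals subst hsplit; simp only [List.length_append, List.length_cons]; omega

lemma mpPow_le_mpStar_of_lt (M : Matrix (Fin n) (Fin n) ℝ) {m : ℕ} (hm : m < n - 1)
    (i k : Fin n) : mpPow M m i k ≤ mpStar M i k := by
  have h := Finite.le_ciSup (fun m : Fin (n - 1) => mpPow M m i k) ⟨m, hm⟩
  simp only [mpStar, Matrix.of_apply]
  split_ifs
  exacts [h.trans (le_max_right _ _), h]

lemma mpStar_self_nonneg (M : Matrix (Fin n) (Fin n) ℝ) (i : Fin n) : 0 ≤ mpStar M i i := by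
  simp [mpStar]

lemma mpStar_le {M : Matrix (Fin n) (Fin n) ℝ} {i k : Fin n} {c : ℝ}
    (h : ∀ m < n - 1, mpPow M m i k ≤ c) (h₀ : i = k → 0 ≤ c) : mpStar M i k ≤ c := by
  rcases Nat.eq_zero_or_pos (n - 1) with hn | hn
  · have hik : i = k := Fin.ext (by omega)
    have : IsEmpty (Fin (n - 1)) := by rw [hn]; infer_instance
    simpa [mpStar, hik, Real.iSup_of_isEmpty] using h₀ hik
  · have : Nonempty (Fin (n - 1)) := ⟨⟨0, hn⟩⟩
    have hsup : (⨆ m : Fin (n - 1), mpPow M m i k) ≤ c := ciSup_le fun m => h m m.isLt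
    simp only [mpStar, Matrix.of_apply]
    split_ifs with hik
    exacts [max_le (h₀ hik) hsup, hsup]

theorem HasNonposCycles.walkWeight_le_mpStar {M : Matrix (Fin n) (Fin n) ℝ}
    (hM : HasNonposCycles M) (i : Fin n) (l : List (Fin n)) (k : Fin n) :
    walkWeight M i l k ≤ mpStar M i k := by
  by_cases hik : i = k
  · subst hik
    exact (hM.walkWeight_self_nonpos i l).trans (mpStar_self_nonneg M i)
  by_cases hl : l.length < n - 1
  · exact (walkWeight_le_mpPow M i l k).trans (mpPow_le_mpStar_of_lt M hl i k)
  have hdup : ¬ (i :: (l ++ [k])).Nodup := fun hnd => by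
    have := hnd.length_le_card
    simp only [List.length_cons, List.length_append, Fintype.card_fin] at this
    omega
  by_cases hi : i ∈ l
  · obtain ⟨l₁, l₂, hsplit⟩ := List.append_of_mem hi
    rw [hsplit, walkWeight_append_cons]
    linarith [hM.walkWeight_self_nonpos i l₁, hM.walkWeight_le_mpStar i l₂ k]
  by_cases hk : k ∈ l
  · obtain ⟨l₁, l₂, hsplit⟩ := List.append_of_mem hk
    rw [hsplit, walkWeight_append_cons]
    linarith [hM.walkWeight_le_mpStar i l₁ k, hM.walkWeight_self_nonpos k l₂]
  have hl : ¬ l.Nodup := fun hnd => hdup <| List.nodup_cons.mpr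
    ⟨by simp [hi, hik], hnd.append (List.nodup_singleton k) (by simpa using hk)⟩
  obtain ⟨b, l₁, l₂, l₃, hsplit⟩ := List.exists_append_cons_append_cons_of_not_nodup hl
  rw [hsplit, walkWeight_append_cons_append_cons]
  linarith [hM.walkWeight_le_mpStar i (l₁ ++ b :: l₃) k, hM.walkWeight_self_nonpos b l₂]
termination_by l.length
decreasing_by all_goals subst hsplit; simp only [List.length_append, List.length_cons]; omega

theorem HasNonposCycles.add_mpStar_le {M : Matrix (Fin n) (Fin n) ℝ} (hM : HasNonposCycles M)
    (i j k : Fin n) : M i j + mpStar M j k ≤ mpStar M i k := by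
  suffices mpStar M j k ≤ mpStar M i k - M i j by linarith
  refine mpStar_le (fun m _ => ?_) fun hjk => ?_
  · obtain ⟨l, -, hl⟩ := exists_walkWeight_eq_mpPow M m j k
    linarith [hM.walkWeight_le_mpStar i (j :: l) k, walkWeight_cons M i j l k]
  · subst hjk
    linarith [hM.walkWeight_le_mpStar i [] j, walkWeight_nil M i j]

lemma mpVecMul_mpStar_eq_self {M : Matrix (Fin n) (Fin n) ℝ} {x : Fin n → ℝ}
    (hx : ∀ i j, M i j + x j ≤ x i) : mpVecMul (mpStar M) x = x := by
  funext i
  have : Nonempty (Fin n) := ⟨i⟩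
  refine le_antisymm (ciSup_le fun j => ?_) (Finite.le_ciSup_of_le i ?_)
  · suffices mpStar M i j ≤ x i - x j by linarith
    refine mpStar_le (fun m _ => ?_) fun hij => by simp [hij]
    obtain ⟨l, -, hl⟩ := exists_walkWeight_eq_mpPow M m i j
    linarith [walkWeight_add_le hx i l j]
  · linarith [mpStar_self_nonneg M i]

theorem HasNonposCycles.le_iff_exists_eq_mpVecMul_mpStar {M : Matrix (Fin n) (Fin n) ℝ}
    (hM : HasNonposCycles M) (x : Fin n → ℝ) :
    (∀ i j, M i j + x j ≤ x i) ↔ ∃ u, x = mpVecMul (mpStar M) u := by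
  refine ⟨fun hx => ⟨x, (mpVecMul_mpStar_eq_self hx).symm⟩, ?_⟩
  rintro ⟨u, rfl⟩ i j
  have : Nonempty (Fin n) := ⟨i⟩
  simp only [mpVecMul]
  rw [add_comm, ← le_sub_iff_add_le]
  exact ciSup_le fun k => by
    linarith [hM.add_mpStar_le i j k, Finite.le_ciSup (fun k => mpStar M i k + u k) k]

lemma finRotate_eq_mk_mod {k : ℕ} (hk : 0 < k) (t : Fin k) :
    finRotate k t = ⟨(t + 1) % k, Nat.mod_lt _ hk⟩ := by
  have : NeZero k := ⟨hk.ne'⟩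
  ext
  simp [finRotate_apply, Fin.val_add]

lemma cycleMean_le_mpCycleMean (M : Matrix (Fin n) (Fin n) ℝ) {k : ℕ} (hk : 0 < k) (hkn : k ≤ n)
    (f : Fin k → Fin n) :
    (∑ t : Fin k, M (f t) (f ⟨(t + 1) % k, Nat.mod_lt _ hk⟩)) / k ≤ mpCycleMean M := by
  refine le_csSup ⟨⨆ p : Fin n × Fin n, M p.1 p.2, ?_⟩ ⟨k, hk, hkn, f, rfl⟩
  rintro _ ⟨k, hk, -, f, rfl⟩
  rw [div_le_iff₀ (by positivity)]
  simpa [mul_comm] using Finset.sum_le_card_nsmul Finset.univ _ _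
    fun t _ => Finite.le_ciSup (fun p : Fin n × Fin n => M p.1 p.2) (f t, f ⟨(t + 1) % k, _⟩)

lemma walkWeight_self_le_mpCycleMean (M : Matrix (Fin n) (Fin n) ℝ) (a : Fin n)
    (l : List (Fin n)) (hl : l.length < n) :
    walkWeight M a l a ≤ (l.length + 1) * mpCycleMean M := by
  have hk : 0 < l.length + 1 := l.length.succ_pos
  have hcycle : ∀ t : Fin (l.length + 1),
      (l ++ [a])[t] = (a :: l)[((t : ℕ) + 1) % (l.length + 1)]'(Nat.mod_lt _ hk) := by
    intro t
    rcases Fin.eq_castSucc_or_eq_last t with ⟨t, rfl⟩ | rfl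
    · simp [Nat.mod_eq_of_lt (Nat.succ_lt_succ t.isLt), List.getElem_append_left]
    · simp
  have := cycleMean_le_mpCycleMean M hk hl (fun t => (a :: l)[t])
  rw [div_le_iff₀ (by positivity), mul_comm] at this
  simpa [walkWeight_eq_sum, hcycle] using this

lemma hasNonposCycles_sub_mpCycleMean (M : Matrix (Fin n) (Fin n) ℝ) :
    HasNonposCycles (Matrix.of fun i j => M i j - mpCycleMean M) := fun a l hl => by
  rw [walkWeight_sub_const]
  linarith [walkWeight_self_le_mpCycleMean M a l hl]

lemma add_sub_le_iSup (M : Matrix (Fin n) (Fin n) ℝ) (x : Fin n → ℝ) (i j : Fin n) :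
    M i j + x j - x i ≤ ⨆ p : Fin n × Fin n, (M p.1 p.2 + x p.2 - x p.1) :=
  Finite.le_ciSup (fun p : Fin n × Fin n => M p.1 p.2 + x p.2 - x p.1) (i, j)

lemma mpCycleMean_le_iSup [Nonempty (Fin n)] (M : Matrix (Fin n) (Fin n) ℝ) (x : Fin n → ℝ) :
    mpCycleMean M ≤ ⨆ p : Fin n × Fin n, (M p.1 p.2 + x p.2 - x p.1) := by
  set R := ⨆ p : Fin n × Fin n, (M p.1 p.2 + x p.2 - x p.1)
  have hn : 0 < n := Fin.pos_iff_nonempty.mpr ‹_›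
  refine csSup_le ⟨_, 1, one_pos, hn, fun _ => Classical.arbitrary _, rfl⟩ ?_
  rintro _ ⟨k, hk, -, f, rfl⟩
  have hedge : ∀ t, M (f t) (f (finRotate k t)) ≤ R + x (f t) - x (f (finRotate k t)) :=
    fun t => by linarith [add_sub_le_iSup M x (f t) (f (finRotate k t))]
  simp only [← finRotate_eq_mk_mod hk]
  rw [div_le_iff₀ (by positivity)]
  calc ∑ t, M (f t) (f (finRotate k t))
      ≤ ∑ t, (R + x (f t) - x (f (finRotate k t))) := Finset.sum_le_sum fun t _ => hedge t
    _ = R * k := by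
      rw [Finset.sum_sub_distrib, Finset.sum_add_distrib,
        Equiv.sum_comp (finRotate k) (fun t => x (f t))]
      simp [mul_comm]

lemma iSup_abs_sub_eq_iSup [Nonempty (Fin n)] {A B : Matrix (Fin n) (Fin n) ℝ}
    (hB : ∀ i j, B i j = max (A i j) (-(A j i))) (x : Fin n → ℝ) :
    (⨆ p : Fin n × Fin n, |A p.1 p.2 - (x p.1 - x p.2)|) =
      ⨆ p : Fin n × Fin n, (B p.1 p.2 + x p.2 - x p.1) := by
  set S := ⨆ p : Fin n × Fin n, (B p.1 p.2 + x p.2 - x p.1)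
  set T := ⨆ p : Fin n × Fin n, |A p.1 p.2 - (x p.1 - x p.2)|
  have hS : ∀ i j, B i j ≤ S + x i - x j := fun i j => by linarith [add_sub_le_iSup B x i j]
  have hT : ∀ i j, |A i j - (x i - x j)| ≤ T :=
    fun i j => Finite.le_ciSup (fun p : Fin n × Fin n => |A p.1 p.2 - (x p.1 - x p.2)|) (i, j)
  refine le_antisymm (ciSup_le fun ⟨i, j⟩ => abs_le.mpr ⟨?_, ?_⟩) (ciSup_le fun ⟨i, j⟩ => ?_)
  · linarith [hS j i, (le_max_right _ _).trans_eq (hB j i).symm]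
  · linarith [hS i j, (le_max_left _ _).trans_eq (hB i j).symm]
  · suffices B i j ≤ T + x i - x j by dsimp only; linarith
    rw [hB]
    exact max_le (by linarith [le_abs_self (A i j - (x i - x j)), hT i j])
      (by linarith [neg_le_abs (A j i - (x j - x i)), hT j i])

lemma iSup_add_sub_eq_mpCycleMean_iff [Nonempty (Fin n)] (M : Matrix (Fin n) (Fin n) ℝ)
    (x : Fin n → ℝ) :
    (⨆ p : Fin n × Fin n, (M p.1 p.2 + x p.2 - x p.1)) = mpCycleMean M ↔
      ∀ i j, M i j - mpCycleMean M + x j ≤ x i := by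
  refine ⟨fun h i j => ?_, fun h => le_antisymm (ciSup_le fun p => ?_) (mpCycleMean_le_iSup M x)⟩
  · linarith [add_sub_le_iSup M x i j]
  · linarith [h p.1 p.2]

end

/-- `x` satisfies `max_{i,j} |A_{ij} − (x_i − x_j)| = μ` (i.e. minimizes
this Chebyshev distance) iff `x = (B − μ)^* ⊗ u` in max-plus arithmetic for some
`u ∈ ℝⁿ`, where `B_{ij} = max(A_{ij}, −A_{ji})` and `μ = λ(B)`. -/
theorem mp_cheb_minimizers {n : ℕ} (hn : 1 ≤ n) (A : Matrix (Fin n) (Fin n) ℝ)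
    (B : Matrix (Fin n) (Fin n) ℝ) (hB : ∀ i j, B i j = max (A i j) (-(A j i)))
    (μ : ℝ) (hμ : μ = mpCycleMean B) (x : Fin n → ℝ) :
    (⨆ p : Fin n × Fin n, |A p.1 p.2 - (x p.1 - x p.2)|) = μ ↔
      ∃ u : Fin n → ℝ, x = mpVecMul (mpStar (Matrix.of fun i j => B i j - μ)) u := by
  have : Nonempty (Fin n) := ⟨⟨0, hn⟩⟩
  subst hμ
  rw [iSup_abs_sub_eq_iSup hB, iSup_add_sub_eq_mpCycleMean_iff]
  exact (hasNonposCycles_sub_mpCycleMean B).le_iff_exists_eq_mpVecMul_mpStar x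

end
end

section
/- Let n, m ≥ 1 and let A_1, …, A_m be n×n nonnegative real matrices such that for all i, j there exists l with (A_l)_{ij} > 0 or (A_l)_{ji} > 0. Define B by B_{ij} = max_{1≤l≤m} max((A_l)_{ij}, ((A_l)_{ji})^{-}) where t^{-} = 1/t if t > 0 and t^{-} = 0 otherwise, and let μ = λ(B) be the max-times spectral radius of B. Then the minimum over positive vectors x ∈ ℝ_{>0}^n of max_{1≤l≤m} ρ(A_l, x) equals μ, and the minimum is attained. -/
open scoped BigOperators

noncomputable section

/-!
For positive `x`, `max_l ρ(A_l, x)` is the least `c ≥ 0` with `B i j * x j ≤ c * x i` for all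
`i, j`, because `(A_l)_{ij} ≤ B_{ij}` and `((A_l)_{ij})⁻¹ ≤ B_{ji}`. Any such `c` bounds every cycle
mean of `B`, since the ratios `x i / x j` telescope around a cycle; hence `μ = λ(B)` is a lower
bound. It is attained at a subeigenvector `B x ≤ μ x`: every cycle of `S = B / μ` has product at
most `1`, so cutting out cycles bounds the products of all `S`-walks, and
`x i := sup of the products of the S-walks leaving i` works.
-/

open Finset

variable {ι : Type*}

def walkProd (S : Matrix ι ι ℝ) (g : ℕ → ι) (k : ℕ) : ℝ :=
  ∏ t ∈ range k, S (g t) (g (t + 1))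

section Walks

variable {S : Matrix ι ι ℝ}

lemma walkProd_congr {g g' : ℕ → ι} {k : ℕ} (h : ∀ s ≤ k, g s = g' s) :
    walkProd S g k = walkProd S g' k :=
  prod_congr rfl fun t ht => by
    rw [mem_range] at ht
    rw [h t ht.le, h (t + 1) ht]

lemma walkProd_add (g : ℕ → ι) (a b : ℕ) :
    walkProd S g (a + b) = walkProd S g a * walkProd S (fun s => g (a + s)) b := by
  simp only [walkProd, prod_range_add, add_assoc]

lemma walkProd_cons (i : ι) (g : ℕ → ι) (k : ℕ) :
    walkProd S (fun s => Nat.casesOn s i g) (k + 1) = S i (g 0) * walkProd S g k := by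
  rw [walkProd, prod_range_succ', mul_comm]
  rfl

lemma walkProd_smul (c : ℝ) (g : ℕ → ι) (k : ℕ) :
    walkProd (c • S) g k = c ^ k * walkProd S g k := by
  simp [walkProd, prod_mul_distrib]

variable (hS : ∀ i j, 0 ≤ S i j)
include hS

lemma walkProd_nonneg (g : ℕ → ι) (k : ℕ) : 0 ≤ walkProd S g k :=
  prod_nonneg fun _ _ => hS _ _

lemma walkProd_le_pow {M : ℝ} (hM : ∀ i j, S i j ≤ M) (g : ℕ → ι) (k : ℕ) :
    walkProd S g k ≤ M ^ k := by
  simpa [walkProd] using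
    prod_le_prod (s := range k) (fun _ _ => hS _ _) (fun t _ => hM (g t) (g (t + 1)))

lemma walkProd_mul_le {x : ι → ℝ} {c : ℝ} (hc : 0 ≤ c)
    (h : ∀ i j, S i j * x j ≤ c * x i) (g : ℕ → ι) (k : ℕ) :
    walkProd S g k * x (g k) ≤ c ^ k * x (g 0) := by
  induction k with
  | zero => simp [walkProd]
  | succ k ih =>
    calc walkProd S g (k + 1) * x (g (k + 1))
        = walkProd S g k * (S (g k) (g (k + 1)) * x (g (k + 1))) := by
          rw [walkProd, prod_range_succ, ← walkProd, mul_assoc]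
      _ ≤ walkProd S g k * (c * x (g k)) :=
          mul_le_mul_of_nonneg_left (h _ _) (walkProd_nonneg hS g k)
      _ = c * (walkProd S g k * x (g k)) := by ring
      _ ≤ c * (c ^ k * x (g 0)) := mul_le_mul_of_nonneg_left ih hc
      _ = c ^ (k + 1) * x (g 0) := by ring

variable [Fintype ι]
  (hC : ∀ g k, 0 < k → k ≤ Fintype.card ι → g 0 = g k → walkProd S g k ≤ 1)
include hC

/-- The walk on the right is `g` with its closed subwalk from `a` to `a + d` cut out. -/
lemma walkProd_le_splice (g : ℕ → ι) {a d : ℕ} (hd : 0 < d) (hdn : d ≤ Fintype.card ι)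
    (hg : g a = g (a + d)) (e : ℕ) :
    walkProd S g (a + d + e) ≤
      walkProd S (fun s => if s ≤ a then g s else g (s + d)) (a + e) := by
  set g' := fun s => if s ≤ a then g s else g (s + d)
  have head : walkProd S g' a = walkProd S g a :=
    walkProd_congr fun s hs => if_pos hs
  have tail : (fun s => g' (a + s)) = fun s => g (a + d + s) := by
    funext s
    rcases Nat.eq_zero_or_pos s with rfl | hs
    · simpa [g'] using hg
    · simp only [g', if_neg (by omega : ¬a + s ≤ a)]
      congr 1
      omega
  have cycle : walkProd S (fun s => g (a + s)) d ≤ 1 := hC _ d hd hdn (by simpa using hg)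
  rw [walkProd_add, walkProd_add, walkProd_add g', head, tail]
  exact mul_le_mul_of_nonneg_right
    (mul_le_of_le_one_right (walkProd_nonneg hS g a) cycle) (walkProd_nonneg hS _ e)

lemma exists_walkProd_le_of_lt_card (g : ℕ → ι) (k : ℕ) :
    ∃ g' k', k' < Fintype.card ι ∧ walkProd S g k ≤ walkProd S g' k' := by
  induction k using Nat.strong_induction_on generalizing g with
  | _ k ih =>
  by_cases hk : k < Fintype.card ι
  · exact ⟨g, k, hk, le_rfl⟩
  obtain ⟨a, b, hab, hgab⟩ := Fintype.exists_ne_map_eq_of_card_lt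
    (fun t : Fin (Fintype.card ι + 1) => g t) (by simp)
  wlog hlt : a < b generalizing a b
  · exact this b a hab.symm hgab.symm (lt_of_le_of_ne (not_lt.mp hlt) hab.symm)
  obtain ⟨g', k', hk', hle⟩ := ih (a + (k - b)) (by omega) _
  refine ⟨g', k', hk', le_trans ?_ hle⟩
  have hsplice := walkProd_le_splice hS hC g (d := b - a) (a := a) (by omega) (by omega)
    (by simpa [Nat.add_sub_cancel' hlt.le] using hgab) (k - b)
  rwa [show a + (b - a) + (k - b) = k by omega] at hsplice

lemma exists_walkProd_le : ∃ C, ∀ g k, walkProd S g k ≤ C := by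
  obtain ⟨M, hM⟩ := Finite.bddAbove_range fun p : ι × ι => S p.1 p.2
  refine ⟨max 1 M ^ Fintype.card ι, fun g k => ?_⟩
  obtain ⟨g', k', hk', hle⟩ := exists_walkProd_le_of_lt_card hS hC g k
  calc walkProd S g k ≤ walkProd S g' k' := hle
    _ ≤ max 1 M ^ k' := walkProd_le_pow hS (fun i j => le_max_of_le_right (hM ⟨(i, j), rfl⟩)) g' k'
    _ ≤ max 1 M ^ Fintype.card ι := pow_le_pow_right₀ (le_max_left _ _) hk'.le

/-- Take `y i` to be the supremum of the products of walks leaving `i`; prepending the edge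
`i → j` to a walk leaving `j` gives `S i j * y j ≤ y i`. -/
lemma exists_subeigenvector_of_cycles_le_one :
    ∃ y : ι → ℝ, (∀ i, 1 ≤ y i) ∧ ∀ i j, S i j * y j ≤ y i := by
  obtain ⟨C, hC⟩ := exists_walkProd_le hS hC
  let walks (i : ι) : Set ℝ := {r | ∃ g k, g 0 = i ∧ r = walkProd S g k}
  have bdd (i : ι) : BddAbove (walks i) := ⟨C, by rintro _ ⟨g, k, -, rfl⟩; exact hC g k⟩
  have one_mem (i : ι) : 1 ∈ walks i := ⟨fun _ => i, 0, rfl, by simp [walkProd]⟩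
  have one_le (i : ι) : 1 ≤ sSup (walks i) := le_csSup (bdd i) (one_mem i)
  refine ⟨fun i => sSup (walks i), one_le, fun i j => ?_⟩
  rcases (hS i j).eq_or_lt with hij | hij
  · rw [← hij, zero_mul]
    exact zero_le_one.trans (one_le i)
  rw [mul_comm, ← le_div_iff₀ hij]
  refine csSup_le ⟨1, one_mem j⟩ ?_
  rintro _ ⟨g, k, rfl, rfl⟩
  rw [le_div_iff₀ hij, mul_comm, ← walkProd_cons]
  exact le_csSup (bdd i) ⟨_, _, rfl, rfl⟩

end Walks

/-- The set whose supremum is `mtSpecRad B`. -/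
def cycleMeans {n : ℕ} (B : Matrix (Fin n) (Fin n) ℝ) : Set ℝ :=
  { r : ℝ | ∃ (k : ℕ) (hk : 0 < k), k ≤ n ∧ ∃ f : Fin k → Fin n,
    r = (∏ t : Fin k, B (f t) (f ⟨((t : ℕ) + 1) % k, Nat.mod_lt _ hk⟩)) ^ ((k : ℝ)⁻¹) }

lemma prod_cycle_eq_walkProd (S : Matrix ι ι ℝ) {k : ℕ} (hk : 0 < k) (f : Fin k → ι) :
    ∏ t : Fin k, S (f t) (f ⟨((t : ℕ) + 1) % k, Nat.mod_lt _ hk⟩) =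
      walkProd S (fun s => f ⟨s % k, Nat.mod_lt _ hk⟩) k := by
  rw [walkProd, ← Fin.prod_univ_eq_prod_range]
  refine prod_congr rfl fun t _ => ?_
  simp only [Nat.mod_eq_of_lt t.isLt]

section SpectralRadius

variable {n : ℕ} {B : Matrix (Fin n) (Fin n) ℝ} (hB : ∀ i j, 0 ≤ B i j)
include hB

lemma le_of_mem_cycleMeans {x : Fin n → ℝ} {c : ℝ} (hc : 0 ≤ c) (hx : ∀ i, 0 < x i)
    (h : ∀ i j, B i j * x j ≤ c * x i) {r : ℝ} (hr : r ∈ cycleMeans B) : r ≤ c := by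
  obtain ⟨k, hk, -, f, rfl⟩ := hr
  rw [prod_cycle_eq_walkProd B hk f]
  set g := fun s => f ⟨s % k, Nat.mod_lt _ hk⟩
  have closed : g k = g 0 := by simp [g]
  have hprod := walkProd_mul_le hB hc h g k
  rw [closed, mul_le_mul_iff_left₀ (hx _)] at hprod
  rw [Real.rpow_inv_le_iff_of_pos (walkProd_nonneg hB g k) hc (by positivity),
    Real.rpow_natCast]
  exact hprod

lemma bddAbove_cycleMeans : BddAbove (cycleMeans B) := by
  obtain ⟨M, hM⟩ := Finite.bddAbove_range fun p : Fin n × Fin n => B p.1 p.2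
  exact ⟨max 0 M, fun r hr => le_of_mem_cycleMeans hB (le_max_left 0 M) (fun _ => one_pos)
    (fun i j => by simpa using le_max_of_le_right (hM ⟨(i, j), rfl⟩)) hr⟩

lemma mtSpecRad_le_of_subeigenvector {x : Fin n → ℝ} {c : ℝ} (hc : 0 ≤ c)
    (hx : ∀ i, 0 < x i) (h : ∀ i j, B i j * x j ≤ c * x i) : mtSpecRad B ≤ c :=
  Real.sSup_le (fun _ => le_of_mem_cycleMeans hB hc hx h) hc

lemma walkProd_le_mtSpecRad_pow {g : ℕ → Fin n} {k : ℕ} (hk : 0 < k) (hkn : k ≤ n)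
    (hg : g 0 = g k) : walkProd B g k ≤ mtSpecRad B ^ k := by
  have hcycle : walkProd B g k = ∏ t : Fin k, B (g t) (g (((t : ℕ) + 1) % k)) := by
    rw [prod_cycle_eq_walkProd B hk fun t => g t]
    refine walkProd_congr fun s hs => ?_
    show g s = g (s % k)
    rcases hs.lt_or_eq with hs | rfl
    · rw [Nat.mod_eq_of_lt hs]
    · rw [Nat.mod_self, hg]
  have hmem : walkProd B g k ^ ((k : ℝ)⁻¹) ∈ cycleMeans B := ⟨k, hk, hkn, _, by rw [hcycle]⟩
  have hle := le_csSup (bddAbove_cycleMeans hB) hmem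
  rwa [Real.rpow_inv_le_iff_of_pos (walkProd_nonneg hB g k)
    ((Real.rpow_nonneg (walkProd_nonneg hB g k) _).trans hle) (by positivity),
    Real.rpow_natCast] at hle

lemma mtSpecRad_pos {i : Fin n} (hi : 0 < B i i) : 0 < mtSpecRad B := by
  have h := walkProd_le_mtSpecRad_pow hB (g := fun _ => i) one_pos i.pos rfl
  simp only [walkProd, range_one, prod_singleton, pow_one] at h
  exact hi.trans_le h

/-- Apply the walk construction to `λ(B)⁻¹ • B`, all of whose cycles have product at most `1`. -/
lemma exists_subeigenvector_mtSpecRad (hpos : 0 < mtSpecRad B) :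
    ∃ y : Fin n → ℝ, (∀ i, 0 < y i) ∧ ∀ i j, B i j * y j ≤ mtSpecRad B * y i := by
  set μ := mtSpecRad B
  have hS : ∀ i j, 0 ≤ (μ⁻¹ • B) i j := fun i j => mul_nonneg (inv_nonneg.2 hpos.le) (hB i j)
  have hC : ∀ g k, 0 < k → k ≤ Fintype.card (Fin n) → g 0 = g k →
      walkProd (μ⁻¹ • B) g k ≤ 1 := by
    intro g k hk hkn hg
    rw [walkProd_smul, inv_pow, inv_mul_le_one₀ (pow_pos hpos k)]
    exact walkProd_le_mtSpecRad_pow hB hk (by simpa using hkn) hg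
  obtain ⟨y, hy, hsub⟩ := exists_subeigenvector_of_cycles_le_one hS hC
  refine ⟨y, fun i => one_pos.trans_le (hy i), fun i j => ?_⟩
  have := mul_le_mul_of_nonneg_left (hsub i j) hpos.le
  rwa [Matrix.smul_apply, smul_eq_mul, ← mul_assoc, ← mul_assoc, mul_inv_cancel₀ hpos.ne',
    one_mul] at this

end SpectralRadius

section Rho

variable {n : ℕ} (A : Matrix (Fin n) (Fin n) ℝ) (x : Fin n → ℝ)

lemma mul_div_le_mtRho (i j : Fin n) : A i j * x j / x i ≤ mtRho A x :=
  le_max_of_le_left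
    (le_ciSup (Finite.bddAbove_range fun p : Fin n × Fin n => A p.1 p.2 * x p.2 / x p.1) (i, j))

lemma div_mul_le_mtRho {i j : Fin n} (h : 0 < A i j) : x i / (A i j * x j) ≤ mtRho A x := by
  refine le_max_of_le_right (le_csSup ?_ ⟨i, j, h, rfl⟩)
  refine (Finite.bddAbove_range fun p : Fin n × Fin n => x p.1 / (A p.1 p.2 * x p.2)).mono ?_
  rintro _ ⟨i, j, -, rfl⟩
  exact ⟨(i, j), rfl⟩

lemma mtRho_nonneg (hA : ∀ i j, 0 ≤ A i j) (hx : ∀ i, 0 ≤ x i) : 0 ≤ mtRho A x :=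
  le_max_of_le_left (Real.iSup_nonneg fun _ => div_nonneg (mul_nonneg (hA _ _) (hx _)) (hx _))

lemma mtRho_le {c : ℝ} (hc : 0 ≤ c) (hx : ∀ i, 0 < x i) (h₁ : ∀ i j, A i j * x j ≤ c * x i)
    (h₂ : ∀ i j, 0 < A i j → x i ≤ c * (A i j * x j)) : mtRho A x ≤ c := by
  refine max_le (Real.iSup_le (fun p => (div_le_iff₀ (hx _)).2 (h₁ _ _)) hc) (Real.sSup_le ?_ hc)
  rintro _ ⟨i, j, hij, rfl⟩
  exact (div_le_iff₀ (mul_pos hij (hx j))).2 (h₂ i j hij)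

end Rho

/-- The matrix `B` of the statement; `(A l j i)⁻¹` is the paper's `((A_l)_{ji})⁻` because
`0⁻¹ = 0` in Lean. -/
def reciprocalMax {n m : ℕ} (A : Fin m → Matrix (Fin n) (Fin n) ℝ) : Matrix (Fin n) (Fin n) ℝ :=
  Matrix.of fun i j => ⨆ l : Fin m, max (A l i j) (A l j i)⁻¹

section ReciprocalMax

variable {n m : ℕ} (A : Fin m → Matrix (Fin n) (Fin n) ℝ)

lemma apply_le_reciprocalMax (l : Fin m) (i j : Fin n) : A l i j ≤ reciprocalMax A i j :=
  le_ciSup_of_le (Finite.bddAbove_range _) l (le_max_left _ _)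

lemma inv_apply_le_reciprocalMax (l : Fin m) (i j : Fin n) :
    (A l i j)⁻¹ ≤ reciprocalMax A j i :=
  le_ciSup_of_le (Finite.bddAbove_range _) l (le_max_right _ _)

lemma iSup_mtRho_le {x : Fin n → ℝ} {c : ℝ} (hc : 0 ≤ c) (hx : ∀ i, 0 < x i)
    (h : ∀ i j, reciprocalMax A i j * x j ≤ c * x i) : ⨆ l, mtRho (A l) x ≤ c := by
  refine Real.iSup_le (fun l => mtRho_le _ _ hc hx (fun i j => ?_) (fun i j hij => ?_)) hc
  · exact (mul_le_mul_of_nonneg_right (apply_le_reciprocalMax A l i j) (hx j).le).trans (h i j)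
  · have hinv := (mul_le_mul_of_nonneg_right (inv_apply_le_reciprocalMax A l i j)
      (hx i).le).trans (h j i)
    rwa [inv_mul_le_iff₀ hij, mul_left_comm] at hinv

variable {A} (hA : ∀ l i j, 0 ≤ A l i j)
include hA

lemma reciprocalMax_nonneg (i j : Fin n) : 0 ≤ reciprocalMax A i j :=
  Real.iSup_nonneg fun l => le_max_of_le_left (hA l i j)

lemma reciprocalMax_mul_le_iSup_mtRho {x : Fin n → ℝ} (hx : ∀ i, 0 < x i) (i j : Fin n) :
    reciprocalMax A i j * x j ≤ (⨆ l, mtRho (A l) x) * x i := by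
  set G := ⨆ l, mtRho (A l) x
  have hG : 0 ≤ G := Real.iSup_nonneg fun l => mtRho_nonneg _ _ (hA l) fun i => (hx i).le
  have le_G (l : Fin m) : mtRho (A l) x ≤ G :=
    le_ciSup (Finite.bddAbove_range fun l => mtRho (A l) x) l
  rw [← le_div_iff₀ (hx j)]
  have hG_div : 0 ≤ G * x i / x j := div_nonneg (mul_nonneg hG (hx i).le) (hx j).le
  refine Real.iSup_le (fun l => max_le ?_ ?_) hG_div
  · rw [le_div_iff₀ (hx j), ← div_le_iff₀ (hx i)]
    exact (mul_div_le_mtRho _ _ i j).trans (le_G l)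
  · rcases (hA l j i).eq_or_lt with hji | hji
    · rwa [← hji, inv_zero]
    · rw [le_div_iff₀ (hx j), inv_mul_le_iff₀ hji, mul_left_comm,
        ← div_le_iff₀ (mul_pos hji (hx i))]
      exact (div_mul_le_mtRho _ _ hji).trans (le_G l)

lemma mtSpecRad_reciprocalMax_le_iSup_mtRho {x : Fin n → ℝ} (hx : ∀ i, 0 < x i) :
    mtSpecRad (reciprocalMax A) ≤ ⨆ l, mtRho (A l) x :=
  mtSpecRad_le_of_subeigenvector (reciprocalMax_nonneg hA)
    (Real.iSup_nonneg fun l => mtRho_nonneg _ _ (hA l) fun i => (hx i).le) hx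
    (reciprocalMax_mul_le_iSup_mtRho hA hx)

end ReciprocalMax

theorem mt_rho_multi_min_general {n m : ℕ} (hn : 1 ≤ n)
    (A : Fin m → Matrix (Fin n) (Fin n) ℝ)
    (hA : ∀ l i j, 0 ≤ A l i j)
    (hAA : ∀ i j, ∃ l, 0 < A l i j ∨ 0 < A l j i)
    (B : Matrix (Fin n) (Fin n) ℝ)
    (hB : ∀ i j, B i j = ⨆ l : Fin m, max (A l i j) (A l j i)⁻¹)
    (μ : ℝ) (hμ : μ = mtSpecRad B) :
    IsLeast { y : ℝ | ∃ x : Fin n → ℝ, (∀ i, 0 < x i) ∧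
        y = ⨆ l : Fin m, mtRho (A l) x } μ := by
  obtain rfl : B = reciprocalMax A := Matrix.ext hB
  subst hμ
  set i₀ : Fin n := ⟨0, hn⟩
  have hB₀ := reciprocalMax_nonneg hA
  have hdiag : 0 < reciprocalMax A i₀ i₀ := by
    obtain ⟨l, hl⟩ := hAA i₀ i₀
    exact (hl.elim id id).trans_le (apply_le_reciprocalMax A l i₀ i₀)
  have hμpos := mtSpecRad_pos hB₀ hdiag
  obtain ⟨y, hy, hsub⟩ := exists_subeigenvector_mtSpecRad hB₀ hμpos
  refine ⟨⟨y, hy, le_antisymm (mtSpecRad_reciprocalMax_le_iSup_mtRho hA hy)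
    (iSup_mtRho_le A hμpos.le hy hsub)⟩, ?_⟩
  rintro _ ⟨x, hx, rfl⟩
  exact mtSpecRad_reciprocalMax_le_iSup_mtRho hA hx

/-- For matrices `A_1, …, A_m` with
`B_{ij} = max_l max((A_l)_{ij}, ((A_l)_{ji})⁻)`, the minimum over positive vectors `x`
of `max_l ρ(A_l, x)` equals the max-times spectral radius `μ = λ(B)`, attained. -/
theorem mt_rho_multi_min {n m : ℕ} (hn : 1 ≤ n) (hm : 1 ≤ m)
    (A : Fin m → Matrix (Fin n) (Fin n) ℝ)
    (hA : ∀ l i j, 0 ≤ A l i j)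
    (hAA : ∀ i j, ∃ l, 0 < A l i j ∨ 0 < A l j i)
    (B : Matrix (Fin n) (Fin n) ℝ)
    (hB : ∀ i j, B i j = ⨆ l : Fin m, max (A l i j) (A l j i)⁻¹)
    (μ : ℝ) (hμ : μ = mtSpecRad B) :
    IsLeast { y : ℝ | ∃ x : Fin n → ℝ, (∀ i, 0 < x i) ∧
        y = ⨆ l : Fin m, mtRho (A l) x } μ :=
  mt_rho_multi_min_general hn A hA hAA B hB μ hμ
end
end

section
/- Let n ≥ 1, let A be an n×n nonnegative real matrix such that for all i, j either A_{ij} > 0 or A_{ji} > 0, define B by B_{ij} = max(A_{ij}, (A_{ji})^{-}) where t^{-} = 1/t if t > 0 and t^{-} = 0 otherwise, and let μ = λ(B) be the max-times spectral radius of B. Let C be an n×n nonnegative real matrix such that max_{1≤k≤n} max_i (C^{⊗k})_{ii} ≤ 1. Then the minimum of ρ(A, x) over all positive vectors x ∈ ℝ_{>0}^n satisfying max_j C_{ij} x_j ≤ x_i for every i equals θ = max( μ, max_{1≤k≤n−1} max_{(i_1,…,i_k) ∈ ℕ^k, 1 ≤ i_1+⋯+i_k ≤ n−k} ( max_i (B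 ⊗ C^{⊗i_1} ⊗ B ⊗ C^{⊗i_2} ⊗ ⋯ ⊗ B ⊗ C^{⊗i_k})_{ii} )^{1/k} ), and this minimum is attained. -/
open scoped BigOperators

noncomputable section

/-!
For `x > 0`, `ρ(A, x) ≤ r` says exactly that `B i j * x j ≤ r * x i` for all `i, j`.

Lower bound: if moreover `C ⊗ x ≤ x`, these inequalities multiply along every product
`B ⊗ C^{⊗ i₁} ⊗ ⋯ ⊗ B ⊗ C^{⊗ i_k}`, so its diagonal is at most `r ^ k`; taking `i₁ = ⋯ = 0`
bounds the cycles of `B`. Hence `θ ≤ ρ(A, x)`.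

Upper bound: let `D = θ⁻¹ B ⊕ C`. Expanding `D^{⊗ k}` into words in `θ⁻¹ B` and `C` and
rotating a closed word so that it starts with `B`, every cycle of `D` of length `k ≤ n` is
either a cycle of `C` or a term counted in `θ`, so it has weight at most `1`. Then a walk of
length `n` repeats a vertex and can be shortened, so `D^{⊗ n} ≤ D^*`, and `x = D^* ⊗ 1` is a
positive vector with `D ⊗ x ≤ x`, i.e. `B ⊗ x ≤ θ x` and `C ⊗ x ≤ x`.
-/

namespace MaxTimes

variable {n : ℕ} {M N P B C : Matrix (Fin n) (Fin n) ℝ}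

def mtId (n : ℕ) : Matrix (Fin n) (Fin n) ℝ := Matrix.of fun i j => if i = j then 1 else 0

def mtAdd (P C : Matrix (Fin n) (Fin n) ℝ) : Matrix (Fin n) (Fin n) ℝ :=
  Matrix.of fun i j => max (P i j) (C i j)

section Algebra

lemma mtId_nonneg (i j : Fin n) : 0 ≤ mtId n i j := by
  simp only [mtId, Matrix.of_apply]; split_ifs <;> norm_num

lemma mtAdd_nonneg (hP : ∀ i j, 0 ≤ P i j) (i j : Fin n) : 0 ≤ mtAdd P C i j :=
  (hP i j).trans (le_max_left _ _)

lemma le_mtMul (i k j : Fin n) : M i k * N k j ≤ mtMul M N i j :=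
  le_ciSup (Finite.bddAbove_range fun l => M i l * N l j) k

lemma mtMul_nonneg (hM : ∀ i j, 0 ≤ M i j) (hN : ∀ i j, 0 ≤ N i j) (i j : Fin n) :
    0 ≤ mtMul M N i j :=
  Real.iSup_nonneg fun k => mul_nonneg (hM i k) (hN k j)

lemma smul_mtMul {c : ℝ} (hc : 0 ≤ c) : mtMul (c • M) N = c • mtMul M N := by
  ext i j
  simp only [mtMul, Matrix.of_apply, Matrix.smul_apply, smul_eq_mul,
    Real.mul_iSup_of_nonneg hc, mul_assoc]

lemma mtMul_smul {c : ℝ} (hc : 0 ≤ c) : mtMul M (c • N) = c • mtMul M N := by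
  ext i j
  simp only [mtMul, Matrix.of_apply, Matrix.smul_apply, smul_eq_mul,
    Real.mul_iSup_of_nonneg hc, mul_left_comm c]

lemma mtPow_zero (M : Matrix (Fin n) (Fin n) ℝ) : mtPow M 0 = mtId n := rfl

lemma mtPow_succ (M : Matrix (Fin n) (Fin n) ℝ) (k : ℕ) :
    mtPow M (k + 1) = mtMul (mtPow M k) M := rfl

lemma mtPow_nonneg (hM : ∀ i j, 0 ≤ M i j) (k : ℕ) (i j : Fin n) : 0 ≤ mtPow M k i j := by
  induction k generalizing i j with
  | zero => exact mtId_nonneg i j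
  | succ k ih => exact mtMul_nonneg ih hM i j

lemma mtChain_zero (P C : Matrix (Fin n) (Fin n) ℝ) (f : Fin 0 → ℕ) :
    mtChain P C 0 f = mtId n := rfl

lemma mtChain_succ (P C : Matrix (Fin n) (Fin n) ℝ) (k : ℕ) (f : Fin (k + 1) → ℕ) :
    mtChain P C (k + 1) f =
      mtMul (mtMul P (mtPow C (f 0))) (mtChain P C k fun t => f t.succ) := rfl

lemma mtChain_nonneg (hP : ∀ i j, 0 ≤ P i j) (hC : ∀ i j, 0 ≤ C i j) (k : ℕ)
    (f : Fin k → ℕ) (i j : Fin n) : 0 ≤ mtChain P C k f i j := by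
  induction k generalizing i j with
  | zero => exact mtId_nonneg i j
  | succ k ih => exact mtMul_nonneg (mtMul_nonneg hP (mtPow_nonneg hC _)) (ih _) i j

lemma mtChain_smul {c : ℝ} (hc : 0 ≤ c) (k : ℕ) (f : Fin k → ℕ) :
    mtChain (c • P) C k f = c ^ k • mtChain P C k f := by
  induction k with
  | zero => rw [mtChain_zero, mtChain_zero, pow_zero, one_smul]
  | succ k ih =>
    rw [mtChain_succ, mtChain_succ, ih, smul_mtMul hc, mtMul_smul (pow_nonneg hc k),
      smul_mtMul hc, smul_smul, pow_succ]

variable [NeZero n]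

lemma mtMul_le {i j : Fin n} {a : ℝ} (h : ∀ k, M i k * N k j ≤ a) : mtMul M N i j ≤ a :=
  ciSup_le h

lemma exists_mtMul_eq (M N : Matrix (Fin n) (Fin n) ℝ) (i j : Fin n) :
    ∃ k, mtMul M N i j = M i k * N k j :=
  (exists_eq_ciSup_of_finite (f := fun k => M i k * N k j)).imp fun _ h => h.symm

lemma mtMul_assoc (hM : ∀ i j, 0 ≤ M i j) (hP : ∀ i j, 0 ≤ P i j) :
    mtMul (mtMul M N) P = mtMul M (mtMul N P) := by
  ext i j
  apply le_antisymm
  · obtain ⟨l, hl⟩ := exists_mtMul_eq (mtMul M N) P i j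
    obtain ⟨k, hk⟩ := exists_mtMul_eq M N i l
    rw [hl, hk, mul_assoc]
    exact (mul_le_mul_of_nonneg_left (le_mtMul k l j) (hM i k)).trans (le_mtMul i k j)
  · obtain ⟨k, hk⟩ := exists_mtMul_eq M (mtMul N P) i j
    obtain ⟨l, hl⟩ := exists_mtMul_eq N P k j
    rw [hk, hl, ← mul_assoc]
    exact (mul_le_mul_of_nonneg_right (le_mtMul i k l) (hP l j)).trans (le_mtMul i l j)

lemma mtId_mtMul (hM : ∀ i j, 0 ≤ M i j) : mtMul (mtId n) M = M := by
  ext i j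
  refine le_antisymm (mtMul_le fun k => ?_) ?_
  · by_cases hik : i = k
    · simp [mtId, hik]
    · simpa [mtId, hik] using hM i j
  · simpa [mtId] using le_mtMul (M := mtId n) (N := M) i i j

lemma mtMul_mtId (hM : ∀ i j, 0 ≤ M i j) : mtMul M (mtId n) = M := by
  ext i j
  refine le_antisymm (mtMul_le fun k => ?_) ?_
  · by_cases hkj : k = j
    · simp [mtId, hkj]
    · simpa [mtId, hkj] using hM i j
  · simpa [mtId] using le_mtMul (M := M) (N := mtId n) i j j

lemma mtPow_add (hM : ∀ i j, 0 ≤ M i j) (a b : ℕ) :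
    mtPow M (a + b) = mtMul (mtPow M a) (mtPow M b) := by
  induction b with
  | zero => rw [Nat.add_zero, mtPow_zero, mtMul_mtId (mtPow_nonneg hM a)]
  | succ b ih =>
    rw [← Nat.add_assoc, mtPow_succ, ih, mtPow_succ, mtMul_assoc (mtPow_nonneg hM a) hM]

lemma mtPow_one (hM : ∀ i j, 0 ≤ M i j) : mtPow M 1 = M := mtId_mtMul hM

lemma mtPow_succ' (hM : ∀ i j, 0 ≤ M i j) (k : ℕ) :
    mtPow M (k + 1) = mtMul M (mtPow M k) := by
  rw [Nat.add_comm, mtPow_add hM, mtPow_one hM]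

lemma mtChain_zero_exponents (hP : ∀ i j, 0 ≤ P i j) (k : ℕ) :
    mtChain P C k 0 = mtPow P k := by
  induction k with
  | zero => rfl
  | succ k ih =>
    rw [mtChain_succ, Pi.zero_apply, mtPow_zero, mtMul_mtId hP, mtPow_succ' hP]
    exact congrArg (mtMul P) ih

lemma mtChain_mul_mtPow (hP : ∀ i j, 0 ≤ P i j) (hC : ∀ i j, 0 ≤ C i j) (k : ℕ)
    (f : Fin (k + 1) → ℕ) (a : ℕ) :
    mtMul (mtChain P C (k + 1) f) (mtPow C a) =
      mtChain P C (k + 1) (Function.update f (Fin.last k) (f (Fin.last k) + a)) := by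
  induction k with
  | zero =>
    rw [mtChain_succ, mtChain_succ, mtChain_zero, mtChain_zero,
      mtMul_mtId (mtMul_nonneg hP (mtPow_nonneg hC _)),
      mtMul_mtId (mtMul_nonneg hP (mtPow_nonneg hC _)), mtMul_assoc hP (mtPow_nonneg hC a),
      ← mtPow_add hC]
    simp
  | succ k ih =>
    have hsucc : (fun t : Fin (k + 1) =>
        Function.update f (Fin.last (k + 1)) (f (Fin.last (k + 1)) + a) t.succ) =
        Function.update (fun t => f t.succ) (Fin.last k) (f (Fin.last k).succ + a) := by
      rw [← Fin.succ_last]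
      exact Function.update_comp_eq_of_injective f (Fin.succ_injective _) _ _
    rw [mtChain_succ P C (k + 1) f, mtChain_succ P C (k + 1), hsucc, ← ih,
      mtMul_assoc (mtMul_nonneg hP (mtPow_nonneg hC _)) (mtPow_nonneg hC a),
      Function.update_of_ne Fin.last_pos.ne]

end Algebra

section Walks

lemma prod_Ico_le_mtPow (hM : ∀ i j, 0 ≤ M i j) (v : ℕ → Fin n) {a b : ℕ} (hab : a ≤ b) :
    ∏ t ∈ Finset.Ico a b, M (v t) (v (t + 1)) ≤ mtPow M (b - a) (v a) (v b) := by
  induction b, hab using Nat.le_induction with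
  | base => simp [mtPow_zero, mtId]
  | succ b hab ih =>
    rw [Finset.prod_Ico_succ_top hab, Nat.sub_add_comm hab, mtPow_succ]
    exact (mul_le_mul_of_nonneg_right ih (hM _ _)).trans (le_mtMul _ _ _)

lemma cycle_le_mtPow (hM : ∀ i j, 0 ≤ M i j) {k : ℕ} (hk : 0 < k) (f : Fin k → Fin n) :
    ∏ t : Fin k, M (f t) (f ⟨(t + 1) % k, Nat.mod_lt _ hk⟩) ≤
      mtPow M k (f ⟨0, hk⟩) (f ⟨0, hk⟩) := by
  have h := prod_Ico_le_mtPow hM (fun t => f ⟨t % k, Nat.mod_lt _ hk⟩) (Nat.zero_le k)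
  simp only [Nat.zero_mod, Nat.mod_self, Nat.sub_zero, ← Finset.range_eq_Ico,
    ← Fin.prod_univ_eq_prod_range (fun t => M (f ⟨t % k, Nat.mod_lt _ hk⟩)
      (f ⟨(t + 1) % k, Nat.mod_lt _ hk⟩))] at h
  convert h using 3 with t
  simp [Nat.mod_eq_of_lt t.isLt]

variable [NeZero n]

lemma exists_walk_mtPow_le (hM : ∀ i j, 0 ≤ M i j) (k : ℕ) (i j : Fin n) :
    ∃ v : ℕ → Fin n, v 0 = i ∧ v (k + 1) = j ∧
      mtPow M (k + 1) i j ≤ ∏ t ∈ Finset.range (k + 1), M (v t) (v (t + 1)) := by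
  induction k generalizing j with
  | zero =>
    refine ⟨fun t => if t = 0 then i else j, rfl, rfl, ?_⟩
    simp [mtPow_one hM]
  | succ k ih =>
    obtain ⟨l, hl⟩ := exists_mtMul_eq (mtPow M (k + 1)) M i j
    obtain ⟨v, hv0, hvl, hv⟩ := ih l
    refine ⟨fun t => if t ≤ k + 1 then v t else j, by simp [hv0], by simp, ?_⟩
    rw [mtPow_succ, hl, Finset.prod_range_succ]
    have hprefix : ∏ t ∈ Finset.range (k + 1),
        M (if t ≤ k + 1 then v t else j) (if t + 1 ≤ k + 1 then v (t + 1) else j) =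
        ∏ t ∈ Finset.range (k + 1), M (v t) (v (t + 1)) :=
      Finset.prod_congr rfl fun t ht => by
        rw [Finset.mem_range] at ht
        rw [if_pos (by omega), if_pos (by omega)]
    simp only [le_refl, if_true, add_le_iff_nonpos_right, one_ne_zero, if_false, hprefix, hvl,
      Nat.le_zero]
    exact mul_le_mul_of_nonneg_right hv (hM l j)

lemma mtPow_diag_le_cycle (hM : ∀ i j, 0 ≤ M i j) (k : ℕ) (i : Fin n) :
    ∃ f : Fin (k + 1) → Fin n, mtPow M (k + 1) i i ≤
      ∏ t : Fin (k + 1), M (f t) (f ⟨(t + 1) % (k + 1), Nat.mod_lt _ k.succ_pos⟩) := by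
  obtain ⟨v, hv0, hvk, hv⟩ := exists_walk_mtPow_le hM k i i
  refine ⟨fun t => v t, hv.trans_eq ?_⟩
  rw [← Fin.prod_univ_eq_prod_range (fun t => M (v t) (v (t + 1)))]
  refine Finset.prod_congr rfl fun t _ => congrArg _ ?_
  rcases Nat.lt_or_ge (t + 1) (k + 1) with ht | ht
  · simp [Nat.mod_eq_of_lt ht]
  · simp [show (t : ℕ) + 1 = k + 1 by omega, hv0, hvk]

lemma prod_range_le_mtPow_of_repeat (hM : ∀ i j, 0 ≤ M i j)
    (hcyc : ∀ k, 1 ≤ k → k ≤ n → ∀ i, mtPow M k i i ≤ 1) (v : ℕ → Fin n) {a b k : ℕ}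
    (hab : a < b) (hbk : b ≤ k) (hba : b - a ≤ n) (hv : v a = v b) :
    ∏ t ∈ Finset.range k, M (v t) (v (t + 1)) ≤ mtPow M (k - (b - a)) (v 0) (v k) := by
  have hprod : ∀ a b, 0 ≤ ∏ t ∈ Finset.Ico a b, M (v t) (v (t + 1)) :=
    fun _ _ => Finset.prod_nonneg fun _ _ => hM _ _
  have hhead := prod_Ico_le_mtPow hM v (Nat.zero_le a)
  have hloop := prod_Ico_le_mtPow hM v hab.le
  have htail := prod_Ico_le_mtPow hM v hbk
  rw [Nat.sub_zero] at hhead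
  rw [← hv] at hloop htail
  replace hloop := hloop.trans (hcyc _ (by omega) hba _)
  rw [Finset.range_eq_Ico, ← Finset.prod_Ico_consecutive _ (Nat.zero_le a) (hab.le.trans hbk),
    ← Finset.prod_Ico_consecutive _ hab.le hbk, show k - (b - a) = a + (k - b) by omega,
    mtPow_add hM]
  calc _ ≤ mtPow M a (v 0) (v a) * (1 * mtPow M (k - b) (v a) (v k)) :=
        mul_le_mul hhead (mul_le_mul hloop htail (hprod _ _) zero_le_one)
          (mul_nonneg (hprod _ _) (hprod _ _)) (mtPow_nonneg hM _ _ _)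
    _ ≤ _ := by rw [one_mul]; exact le_mtMul _ _ _

lemma mtPow_le_mtStar (hM : ∀ i j, 0 ≤ M i j)
    (hcyc : ∀ k, 1 ≤ k → k ≤ n → ∀ i, mtPow M k i i ≤ 1) (i j : Fin n) :
    mtPow M n i j ≤ mtStar M i j := by
  obtain ⟨m, hm⟩ : ∃ m, n = m + 1 := Nat.exists_eq_add_one_of_ne_zero (NeZero.ne n)
  obtain ⟨v, hv0, hvn, hv⟩ := exists_walk_mtPow_le hM m i j
  obtain ⟨s, t, hst, hvst⟩ :=
    Fintype.exists_ne_map_eq_of_card_lt (fun t : Fin (n + 1) => v t) (by simp)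
  wlog hlt : s < t generalizing s t
  · exact this t s hst.symm hvst.symm (lt_of_le_of_ne (not_lt.mp hlt) hst.symm)
  have hshort := prod_range_le_mtPow_of_repeat hM hcyc v (k := n) hlt (by omega) (by omega) hvst
  rw [← hm] at hv hvn
  rw [hv0, hvn] at hshort
  exact (hv.trans hshort).trans
    (le_ciSup (Finite.bddAbove_range fun k : Fin n => mtPow M k i j) ⟨n - (t - s), by omega⟩)

lemma mul_mtStar_le (hM : ∀ i j, 0 ≤ M i j)
    (hcyc : ∀ k, 1 ≤ k → k ≤ n → ∀ i, mtPow M k i i ≤ 1) (i j l : Fin n) :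
    M i j * mtStar M j l ≤ mtStar M i l := by
  simp only [mtStar, Matrix.of_apply, Real.mul_iSup_of_nonneg (hM i j)]
  refine ciSup_le fun k => ?_
  have hstep : M i j * mtPow M k j l ≤ mtPow M (k + 1) i l :=
    (mtPow_succ' hM k).symm ▸ le_mtMul i j l
  rcases Nat.lt_or_eq_of_le (k.isLt : (k : ℕ) + 1 ≤ n) with hk | hk
  · exact hstep.trans (le_ciSup (Finite.bddAbove_range fun k : Fin n => mtPow M k i l) ⟨k + 1, hk⟩)
  · exact hstep.trans
      ((congrArg (fun m => mtPow M m i l) hk).le.trans (mtPow_le_mtStar hM hcyc i l))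

lemma exists_pos_subeigenvector (hM : ∀ i j, 0 ≤ M i j)
    (hcyc : ∀ k, 1 ≤ k → k ≤ n → ∀ i, mtPow M k i i ≤ 1) :
    ∃ x : Fin n → ℝ, (∀ i, 0 < x i) ∧ ∀ i j, M i j * x j ≤ x i := by
  refine ⟨fun i => ⨆ l, mtStar M i l, fun i => ?_, fun i j => ?_⟩
  · have hdiag : (1 : ℝ) ≤ mtStar M i i := by
      simpa [mtStar, mtPow_zero, mtId] using
        le_ciSup (Finite.bddAbove_range fun k : Fin n => mtPow M k i i) ⟨0, NeZero.pos n⟩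
    exact one_pos.trans_le (hdiag.trans (le_ciSup (Finite.bddAbove_range _) i))
  · rw [Real.mul_iSup_of_nonneg (hM i j)]
    exact ciSup_le fun l =>
      (mul_mtStar_le hM hcyc i j l).trans (le_ciSup (Finite.bddAbove_range _) l)

end Walks

section Words

variable [NeZero n]

lemma exists_mtPow_mtAdd_le (hP : ∀ i j, 0 ≤ P i j) (hC : ∀ i j, 0 ≤ C i j) (k : ℕ)
    (i j : Fin n) : ∃ (a m : ℕ) (f : Fin m → ℕ), a + m + ∑ t, f t = k ∧
      mtPow (mtAdd P C) k i j ≤ mtMul (mtPow C a) (mtChain P C m f) i j := by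
  induction k generalizing i with
  | zero =>
    refine ⟨0, 0, 0, by simp, ?_⟩
    rw [mtPow_zero, mtPow_zero, mtChain_zero, mtId_mtMul mtId_nonneg]
  | succ k ih =>
    obtain ⟨l, hl⟩ := exists_mtMul_eq (mtAdd P C) (mtPow (mtAdd P C) k) i j
    obtain ⟨a, m, f, hk, hle⟩ := ih l
    have hstep := mul_le_mul_of_nonneg_left hle (mtAdd_nonneg (C := C) hP i l)
    rw [mtPow_succ' (mtAdd_nonneg hP), hl]
    rcases le_total (P i l) (C i l) with h | h
    · refine ⟨a + 1, m, f, by omega, ?_⟩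
      rw [show mtAdd P C i l = C i l from max_eq_right h] at hstep ⊢
      rw [mtPow_succ' hC, mtMul_assoc hC (mtChain_nonneg hP hC m f)]
      exact hstep.trans (le_mtMul i l j)
    · refine ⟨0, m + 1, Fin.cons a f, by rw [Fin.sum_cons]; omega, ?_⟩
      rw [show mtAdd P C i l = P i l from max_eq_left h] at hstep ⊢
      rw [mtPow_zero, mtId_mtMul (mtChain_nonneg hP hC _ _), mtChain_succ]
      simp only [Fin.cons_zero, Fin.cons_succ]
      rw [mtMul_assoc hP (mtChain_nonneg hP hC m f)]
      exact hstep.trans (le_mtMul i l j)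

lemma mtPow_mtAdd_diag_le_one (hP : ∀ i j, 0 ≤ P i j) (hC : ∀ i j, 0 ≤ C i j)
    (hC1 : ∀ k, 1 ≤ k → k ≤ n → ∀ i, mtPow C k i i ≤ 1)
    (hPC : ∀ m (f : Fin m → ℕ), 0 < m → m + ∑ t, f t ≤ n → ∀ i, mtChain P C m f i i ≤ 1)
    (k : ℕ) (hk : 1 ≤ k) (hkn : k ≤ n) (i : Fin n) : mtPow (mtAdd P C) k i i ≤ 1 := by
  obtain ⟨a, m, f, hsum, hle⟩ := exists_mtPow_mtAdd_le hP hC k i i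
  refine hle.trans ?_
  cases m with
  | zero =>
    rw [mtChain_zero, mtMul_mtId (mtPow_nonneg hC a)]
    simp only [Finset.univ_eq_empty, Finset.sum_empty] at hsum
    exact hC1 a (by omega) (by omega) i
  | succ m =>
    obtain ⟨l, hl⟩ := exists_mtMul_eq (mtPow C a) (mtChain P C (m + 1) f) i i
    rw [hl, mul_comm]
    refine (le_mtMul l i l).trans ?_
    rw [mtChain_mul_mtPow hP hC]
    refine hPC _ _ (by omega) ?_ l
    rw [Finset.sum_update_of_mem (Finset.mem_univ _)]
    rw [Finset.sum_eq_add_sum_sdiff_singleton_of_mem (Finset.mem_univ (Fin.last m))] at hsum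
    omega

end Words

section Subeigenvector

variable [NeZero n] {x : Fin n → ℝ} {r s : ℝ}

lemma mtMul_mul_le (hM : ∀ i j, 0 ≤ M i j) (hs : 0 ≤ s)
    (hMx : ∀ i j, M i j * x j ≤ r * x i) (hNx : ∀ i j, N i j * x j ≤ s * x i) (i j : Fin n) :
    mtMul M N i j * x j ≤ r * s * x i := by
  obtain ⟨l, hl⟩ := exists_mtMul_eq M N i j
  calc mtMul M N i j * x j = M i l * (N l j * x j) := by rw [hl, mul_assoc]
    _ ≤ M i l * (s * x l) := mul_le_mul_of_nonneg_left (hNx l j) (hM i l)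
    _ = s * (M i l * x l) := by ring
    _ ≤ s * (r * x i) := mul_le_mul_of_nonneg_left (hMx i l) hs
    _ = r * s * x i := by ring

lemma mtPow_mul_le (hM : ∀ i j, 0 ≤ M i j) (hx : ∀ i, 0 ≤ x i) (hr : 0 ≤ r)
    (hMx : ∀ i j, M i j * x j ≤ r * x i) (k : ℕ) (i j : Fin n) :
    mtPow M k i j * x j ≤ r ^ k * x i := by
  induction k generalizing i j with
  | zero =>
    by_cases hij : i = j
    · simp [mtPow_zero, mtId, hij]
    · simpa [mtPow_zero, mtId, hij] using hx i
  | succ k ih => simpa [mtPow_succ, pow_succ] using mtMul_mul_le (mtPow_nonneg hM k) hr ih hMx i j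

lemma mtChain_mul_le (hB : ∀ i j, 0 ≤ B i j) (hC : ∀ i j, 0 ≤ C i j) (hx : ∀ i, 0 ≤ x i)
    (hr : 0 ≤ r) (hBx : ∀ i j, B i j * x j ≤ r * x i) (hCx : ∀ i j, C i j * x j ≤ x i)
    (k : ℕ) (f : Fin k → ℕ) (i j : Fin n) :
    mtChain B C k f i j * x j ≤ r ^ k * x i := by
  induction k generalizing i j with
  | zero => simpa [mtChain_zero, mtPow_zero] using mtPow_mul_le hB hx hr hBx 0 i j
  | succ k ih =>
    have hCpow := mtPow_mul_le hC hx zero_le_one (by simpa using hCx) (f 0)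
    have hhead := mtMul_mul_le hB (by simp) hBx hCpow
    simpa [mtChain_succ, pow_succ'] using
      mtMul_mul_le (mtMul_nonneg hB (mtPow_nonneg hC _)) (pow_nonneg hr k) hhead
        (ih fun t => f t.succ) i j

end Subeigenvector

section Theta

lemma rpow_inv_natCast_le_iff {a b : ℝ} (ha : 0 ≤ a) (hb : 0 ≤ b) {k : ℕ} (hk : 0 < k) :
    a ^ (k : ℝ)⁻¹ ≤ b ↔ a ≤ b ^ k := by
  rw [Real.rpow_inv_le_iff_of_pos ha hb (by exact_mod_cast hk), Real.rpow_natCast]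

lemma mtSpecRad_nonneg (hB : ∀ i j, 0 ≤ B i j) : 0 ≤ mtSpecRad B :=
  Real.sSup_nonneg <| by
    rintro _ ⟨k, hk, -, f, rfl⟩
    exact Real.rpow_nonneg (Finset.prod_nonneg fun t _ => hB _ _) _

lemma cycleMean_le_mtSpecRad {k : ℕ} (hk : 0 < k) (hkn : k ≤ n) (f : Fin k → Fin n) :
    (∏ t : Fin k, B (f t) (f ⟨(t + 1) % k, Nat.mod_lt _ hk⟩)) ^ (k : ℝ)⁻¹ ≤ mtSpecRad B := by
  refine le_csSup (Set.Finite.bddAbove ((Set.finite_range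
    fun p : (Σ k : Fin (n + 1), Fin k → Fin n) => if h : 0 < (p.1 : ℕ) then
      (∏ t : Fin p.1, B (p.2 t) (p.2 ⟨(t + 1) % p.1, Nat.mod_lt _ h⟩)) ^ ((p.1 : ℕ) : ℝ)⁻¹
      else 0).subset ?_)) ⟨k, hk, hkn, f, rfl⟩
  rintro _ ⟨k, hk, hkn, f, rfl⟩
  exact ⟨⟨⟨k, by omega⟩, f⟩, by simp [hk]⟩

lemma chainMean_le_mtTheta {k : ℕ} (hk : 0 < k) (f : Fin k → ℕ) (hf : 1 ≤ ∑ t, f t)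
    (hkf : k + ∑ t, f t ≤ n) : (⨆ i, mtChain B C k f i i) ^ (k : ℝ)⁻¹ ≤ mtTheta B C := by
  refine le_max_of_le_right (le_csSup (Set.Finite.bddAbove ((Set.finite_range
    fun p : (Σ k : Fin n, Fin k → Fin n) =>
      (⨆ i, mtChain B C p.1 (fun t => p.2 t) i i) ^ ((p.1 : ℕ) : ℝ)⁻¹).subset ?_))
    ⟨k, hk, by omega, f, hf, by omega, rfl⟩)
  rintro _ ⟨k, hk, hkn, f, -, hfn, rfl⟩
  refine ⟨⟨⟨k, by omega⟩, fun t => ⟨f t, ?_⟩⟩, rfl⟩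
  have := Finset.single_le_sum (fun t _ => Nat.zero_le (f t)) (Finset.mem_univ t)
  omega

variable [NeZero n]

lemma mtPow_diag_le_mtSpecRad_pow (hB : ∀ i j, 0 ≤ B i j) {k : ℕ} (hk : 0 < k) (hkn : k ≤ n)
    (i : Fin n) : mtPow B k i i ≤ mtSpecRad B ^ k := by
  obtain ⟨k, rfl⟩ := Nat.exists_eq_add_one_of_ne_zero hk.ne'
  obtain ⟨f, hf⟩ := mtPow_diag_le_cycle hB k i
  exact hf.trans ((rpow_inv_natCast_le_iff (Finset.prod_nonneg fun t _ => hB _ _)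
    (mtSpecRad_nonneg hB) hk).mp (cycleMean_le_mtSpecRad hk hkn f))

lemma mtChain_diag_le_mtTheta_pow (hB : ∀ i j, 0 ≤ B i j) (hC : ∀ i j, 0 ≤ C i j) {k : ℕ}
    (hk : 0 < k) (f : Fin k → ℕ) (hkf : k + ∑ t, f t ≤ n) (i : Fin n) :
    mtChain B C k f i i ≤ mtTheta B C ^ k := by
  have hθ : 0 ≤ mtTheta B C := (mtSpecRad_nonneg hB).trans (le_max_left _ _)
  rcases Nat.eq_zero_or_pos (∑ t, f t) with hf | hf
  · obtain rfl : f = 0 := funext fun t => Finset.sum_eq_zero_iff.mp hf t (Finset.mem_univ t)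
    rw [mtChain_zero_exponents hB]
    exact (mtPow_diag_le_mtSpecRad_pow hB hk (by omega) i).trans
      (pow_le_pow_left₀ (mtSpecRad_nonneg hB) (le_max_left _ _) k)
  · have hsup := (rpow_inv_natCast_le_iff
      (Real.iSup_nonneg fun i => mtChain_nonneg hB hC k f i i) hθ hk).mp
        (chainMean_le_mtTheta hk f hf hkf)
    exact (le_ciSup (Finite.bddAbove_range fun i => mtChain B C k f i i) i).trans hsup

lemma mtTheta_le (hB : ∀ i j, 0 ≤ B i j) (hC : ∀ i j, 0 ≤ C i j) {r : ℝ} (hr : 0 ≤ r)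
    (h : ∀ k (f : Fin k → ℕ), 0 < k → k + ∑ t, f t ≤ n → ∀ i, mtChain B C k f i i ≤ r ^ k) :
    mtTheta B C ≤ r := by
  refine max_le (Real.sSup_le ?_ hr) (Real.sSup_le ?_ hr)
  · rintro _ ⟨k, hk, hkn, f, rfl⟩
    refine (rpow_inv_natCast_le_iff (Finset.prod_nonneg fun t _ => hB _ _) hr hk).mpr ?_
    refine (cycle_le_mtPow hB hk f).trans ?_
    rw [← mtChain_zero_exponents (C := C) hB]
    exact h k 0 hk (by simpa using hkn) _
  · rintro _ ⟨k, hk, hkn, f, -, hfn, rfl⟩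
    exact (rpow_inv_natCast_le_iff (Real.iSup_nonneg fun i => mtChain_nonneg hB hC k f i i)
      hr hk).mpr (ciSup_le fun i => h k f hk (by omega) i)

lemma diag_le_mtTheta (hB : ∀ i j, 0 ≤ B i j) (i : Fin n) : B i i ≤ mtTheta B C := by
  have h := (mtPow_diag_le_mtSpecRad_pow hB one_pos (NeZero.pos n) i).trans_eq (pow_one _)
  rw [mtPow_one hB] at h
  exact h.trans (le_max_left _ _)

lemma exists_subeigenvector_mtTheta (hB : ∀ i j, 0 ≤ B i j) (hC : ∀ i j, 0 ≤ C i j)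
    (hC1 : ∀ k, 1 ≤ k → k ≤ n → ∀ i, mtPow C k i i ≤ 1) (hθ : 0 < mtTheta B C) :
    ∃ x : Fin n → ℝ, (∀ i, 0 < x i) ∧ (∀ i j, B i j * x j ≤ mtTheta B C * x i) ∧
      ∀ i j, C i j * x j ≤ x i := by
  set θ := mtTheta B C
  have hθB : ∀ i j, 0 ≤ (θ⁻¹ • B) i j := fun i j => mul_nonneg (inv_nonneg.mpr hθ.le) (hB i j)
  obtain ⟨x, hx, hDx⟩ := exists_pos_subeigenvector (mtAdd_nonneg (C := C) hθB)
    (mtPow_mtAdd_diag_le_one hθB hC hC1 fun k f hk hkf i => by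
      rw [mtChain_smul (inv_nonneg.mpr hθ.le), Matrix.smul_apply, smul_eq_mul, inv_pow,
        inv_mul_le_one₀ (pow_pos hθ k)]
      exact mtChain_diag_le_mtTheta_pow hB hC hk f hkf i)
  refine ⟨x, hx, fun i j => ?_, fun i j =>
    (mul_le_mul_of_nonneg_right (le_max_right _ _) (hx j).le).trans (hDx i j)⟩
  have h := (mul_le_mul_of_nonneg_right (le_max_left _ _) (hx j).le).trans (hDx i j)
  rwa [Matrix.smul_apply, smul_eq_mul, mul_assoc, inv_mul_le_iff₀ hθ] at h

end Theta

section Rho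

variable {A : Matrix (Fin n) (Fin n) ℝ} {x : Fin n → ℝ}

lemma mtRho_nonneg (hA : ∀ i j, 0 ≤ A i j) (hx : ∀ i, 0 < x i) : 0 ≤ mtRho A x :=
  le_max_of_le_left <| Real.iSup_nonneg fun _ =>
    div_nonneg (mul_nonneg (hA _ _) (hx _).le) (hx _).le

variable [NeZero n]

lemma mtRho_le_iff (hA : ∀ i j, 0 ≤ A i j) (hB : ∀ i j, B i j = max (A i j) (A j i)⁻¹)
    (hx : ∀ i, 0 < x i) {r : ℝ} (hr : 0 ≤ r) :
    mtRho A x ≤ r ↔ ∀ i j, B i j * x j ≤ r * x i := by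
  have hbdd : BddAbove {s | ∃ i j, 0 < A i j ∧ s = x i / (A i j * x j)} :=
    ((Set.finite_range fun p : Fin n × Fin n => x p.1 / (A p.1 p.2 * x p.2)).subset
      (by rintro _ ⟨i, j, -, rfl⟩; exact ⟨(i, j), rfl⟩)).bddAbove
  have hentry : ∀ i j, B i j * x j ≤ r * x i ↔
      A i j * x j / x i ≤ r ∧ (0 < A j i → x j / (A j i * x i) ≤ r) := by
    intro i j
    rw [hB, max_mul_of_nonneg _ _ (hx j).le, max_le_iff, div_le_iff₀ (hx i)]
    refine and_congr_right' ?_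
    rcases (hA j i).eq_or_lt with h | h
    · simp [← h, mul_nonneg hr (hx i).le]
    · rw [div_le_iff₀ (mul_pos h (hx i)), inv_mul_le_iff₀ h, mul_left_comm]
      simp [h]
  rw [mtRho, max_le_iff, ciSup_le_iff (Finite.bddAbove_range _), Prod.forall]
  constructor
  · rintro ⟨hAx, hxA⟩ i j
    exact (hentry i j).2 ⟨hAx i j, fun h => (le_csSup hbdd ⟨j, i, h, rfl⟩).trans hxA⟩
  · intro h
    refine ⟨fun i j => ((hentry i j).1 (h i j)).1, Real.sSup_le ?_ hr⟩
    rintro _ ⟨i, j, hij, rfl⟩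
    exact ((hentry j i).1 (h j i)).2 hij

lemma mtTheta_le_mtRho (hA : ∀ i j, 0 ≤ A i j) (hB : ∀ i j, B i j = max (A i j) (A j i)⁻¹)
    (hC : ∀ i j, 0 ≤ C i j) (hx : ∀ i, 0 < x i) (hCx : ∀ i j, C i j * x j ≤ x i) :
    mtTheta B C ≤ mtRho A x := by
  have hB0 : ∀ i j, 0 ≤ B i j := fun i j => (hA i j).trans (hB i j ▸ le_max_left _ _)
  have hr := mtRho_nonneg hA hx
  have hBx := (mtRho_le_iff hA hB hx hr).mp le_rfl
  exact mtTheta_le hB0 hC hr fun k f _ _ i => le_of_mul_le_mul_right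
    (mtChain_mul_le hB0 hC (fun i => (hx i).le) hr hBx hCx k f i i) (hx i)

end Rho

end MaxTimes

open MaxTimes in
theorem mt_rho_constrained_min_general {n : ℕ} (hn : 1 ≤ n) (A : Matrix (Fin n) (Fin n) ℝ)
    (hA : ∀ i j, 0 ≤ A i j) (hAA : ∀ i j, 0 < A i j ∨ 0 < A j i)
    (B : Matrix (Fin n) (Fin n) ℝ) (hB : ∀ i j, B i j = max (A i j) (A j i)⁻¹)
    (C : Matrix (Fin n) (Fin n) ℝ) (hC : ∀ i j, 0 ≤ C i j)
    (hTr : ∀ k : ℕ, 1 ≤ k → k ≤ n → ∀ i, mtPow C k i i ≤ 1) :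
    IsLeast { y : ℝ | ∃ x : Fin n → ℝ, (∀ i, 0 < x i) ∧
        (∀ i, (⨆ j, C i j * x j) ≤ x i) ∧ y = mtRho A x }
      (mtTheta B C) := by
  have : NeZero n := ⟨by omega⟩
  have hB0 : ∀ i j, 0 ≤ B i j := fun i j => (hA i j).trans (hB i j ▸ le_max_left _ _)
  have hfeas : ∀ x : Fin n → ℝ, (∀ i, (⨆ j, C i j * x j) ≤ x i) ↔ ∀ i j, C i j * x j ≤ x i :=
    fun x => forall_congr' fun i => ciSup_le_iff (Finite.bddAbove_range _)
  have hθ : 0 < mtTheta B C := by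
    let i : Fin n := ⟨0, hn⟩
    have hBii : 1 ≤ B i i := by
      rw [hB]
      rcases le_total 1 (A i i) with h | h
      · exact le_max_of_le_left h
      · exact le_max_of_le_right ((one_le_inv₀ ((hAA i i).elim id id)).mpr h)
    exact one_pos.trans_le (hBii.trans (diag_le_mtTheta hB0 i))
  obtain ⟨x, hx, hBx, hCx⟩ := exists_subeigenvector_mtTheta hB0 hC hTr hθ
  refine ⟨⟨x, hx, (hfeas x).mpr hCx, le_antisymm (mtTheta_le_mtRho hA hB hC hx hCx)
    ((mtRho_le_iff hA hB hx hθ.le).mpr hBx)⟩, ?_⟩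
  rintro _ ⟨y, hy, hyC, rfl⟩
  exact mtTheta_le_mtRho hA hB hC hy ((hfeas y).mp hyC)

/-- For `B_{ij} = max(A_{ij}, (A_{ji})⁻)`, the minimum of `ρ(A, x)` over
positive vectors `x` satisfying `C ⊗ x ≤ x` equals `θ` (built from `B` and `C`),
and it is attained. -/
theorem mt_rho_constrained_min {n : ℕ} (hn : 1 ≤ n) (A : Matrix (Fin n) (Fin n) ℝ)
    (hA : ∀ i j, 0 ≤ A i j) (hAA : ∀ i j, 0 < A i j ∨ 0 < A j i)
    (B : Matrix (Fin n) (Fin n) ℝ) (hB : ∀ i j, B i j = max (A i j) (A j i)⁻¹)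
    (μ : ℝ) (hμ : μ = mtSpecRad B)
    (C : Matrix (Fin n) (Fin n) ℝ) (hC : ∀ i j, 0 ≤ C i j)
    (hTr : ∀ k : ℕ, 1 ≤ k → k ≤ n → ∀ i, mtPow C k i i ≤ 1) :
    IsLeast { y : ℝ | ∃ x : Fin n → ℝ, (∀ i, 0 < x i) ∧
        (∀ i, (⨆ j, C i j * x j) ≤ x i) ∧ y = mtRho A x }
      (mtTheta B C) :=
  mt_rho_constrained_min_general hn A hA hAA B hB C hC hTr

end
end
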